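/- arXiv:2202.00773 — 6 statements merged into one kernel-verified Lean document; each statement's English description precedes it below -/
import Mathlib

section
/- Let (d, δ) ∈ ℕ² and let (d₀, δ₀) ∈ ℕ² be such that δ₀ < δ - 1 or d₀ < d - 1. Then the sum of (-1)^r, taken over all integers r ≥ 0 and all (r+1)-tuples ((d₀,δ₀), (d₁,δ₁), …, (d_r,δ_r)) of pairs of natural numbers satisfying ∑_{i=0}^{r} d_i = d, ∑_{i=0}^{r} δ_i = δ, and (d_i, δ_i) ≠ (0,0) for all 1 ≤ i ≤ r, equals 0. -/
open Finset

def P (a b r : ℕ) : Finset (Fin r → ℕ × ℕ) :=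
  (Fintype.piFinset fun _ : Fin r => Finset.range (a + 1) ×ˢ Finset.range (b + 1)).filter
    fun f => (∀ i, f i ≠ (0, 0)) ∧ (∑ i, (f i).1) = a ∧ (∑ i, (f i).2) = b

lemma bound1 {r : ℕ} (f : Fin r → ℕ × ℕ) (i : Fin r) : (f i).1 ≤ ∑ j, (f j).1 :=
  Finset.single_le_sum (f := fun j => (f j).1) (fun _ _ => Nat.zero_le _) (Finset.mem_univ i)

lemma bound2 {r : ℕ} (f : Fin r → ℕ × ℕ) (i : Fin r) : (f i).2 ≤ ∑ j, (f j).2 :=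
  Finset.single_le_sum (f := fun j => (f j).2) (fun _ _ => Nat.zero_le _) (Finset.mem_univ i)

lemma mem_P {a b r : ℕ} {f : Fin r → ℕ × ℕ} :
    f ∈ P a b r ↔ (∀ i, f i ≠ (0, 0)) ∧ (∑ i, (f i).1) = a ∧ (∑ i, (f i).2) = b := by
  simp only [P, Finset.mem_filter, Fintype.mem_piFinset, Finset.mem_product, Finset.mem_range]
  refine ⟨fun h => h.2, fun h => ⟨fun i => ⟨?_, ?_⟩, h⟩⟩
  · have := bound1 f i; omega
  · have := bound2 f i; omega

lemma P_eq_empty {a b r : ℕ} (h : a + b < r) : P a b r = ∅ := by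
  rw [Finset.eq_empty_iff_forall_notMem]
  intro f hf
  rw [mem_P] at hf
  obtain ⟨hne, h1, h2⟩ := hf
  have : r ≤ a + b := by
    calc r = ∑ _i : Fin r, 1 := by simp
    _ ≤ ∑ i, ((f i).1 + (f i).2) := by
        refine Finset.sum_le_sum fun i _ => ?_
        have := hne i
        rcases hx : f i with ⟨x, y⟩
        rw [hx] at this
        simp only [ne_eq, Prod.mk.injEq, not_and] at this
        omega
    _ = a + b := by rw [Finset.sum_add_distrib, h1, h2]
  omega

lemma card_P_succ (a b r : ℕ) :
    (P a b (r + 1)).card =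
      ∑ p ∈ (Finset.range (a + 1) ×ˢ Finset.range (b + 1)).erase (0, 0),
        (P (a - p.1) (b - p.2) r).card := by
  have hmaps : ∀ f ∈ P a b (r + 1),
      f 0 ∈ (Finset.range (a + 1) ×ˢ Finset.range (b + 1)).erase (0, 0) := by
    intro f hf
    rw [mem_P] at hf
    obtain ⟨hne, h1, h2⟩ := hf
    simp only [Finset.mem_erase, Finset.mem_product, Finset.mem_range]
    have b1 := bound1 f 0
    have b2 := bound2 f 0
    exact ⟨hne 0, by omega, by omega⟩
  rw [Finset.card_eq_sum_card_fiberwise (f := fun f => f 0) (fun ⦃f⦄ hf => hmaps f hf)]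
  refine Finset.sum_congr rfl fun p hp => ?_
  simp only [Finset.mem_erase, Finset.mem_product, Finset.mem_range, ne_eq,
    Prod.ext_iff, not_and] at hp
  refine Finset.card_nbij' (fun f => Fin.tail f) (fun g => Fin.cons p g) ?_ ?_ ?_ ?_
  · intro f hf
    simp only [Finset.mem_coe, Finset.mem_filter, mem_P] at hf
    obtain ⟨⟨hne, h1, h2⟩, h0⟩ := hf
    have e1 : (f 0).1 = p.1 := by rw [h0]
    have e2 : (f 0).2 = p.2 := by rw [h0]
    rw [Fin.sum_univ_succ] at h1 h2
    rw [Finset.mem_coe, mem_P]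
    refine ⟨fun i => hne i.succ, ?_, ?_⟩ <;> · simp only [Fin.tail]; omega
  · intro g hg
    rw [Finset.mem_coe, mem_P] at hg
    obtain ⟨hne, h1, h2⟩ := hg
    simp only [Finset.mem_coe, Finset.mem_filter, mem_P, Fin.cons_zero, and_true]
    refine ⟨fun i => ?_, ?_, ?_⟩
    · refine Fin.cases ?_ ?_ i
      · simp only [Fin.cons_zero]
        intro hc
        exact hp.1 (by rw [hc]) (by rw [hc])
      · intro j
        simpa using hne j
    · rw [Fin.sum_univ_succ]
      simp only [Fin.cons_zero, Fin.cons_succ]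
      omega
    · rw [Fin.sum_univ_succ]
      simp only [Fin.cons_zero, Fin.cons_succ]
      omega
  · intro f hf
    simp only [Finset.mem_coe, Finset.mem_filter] at hf
    rw [← hf.2]
    exact Fin.cons_self_tail f
  · intro g _
    funext i
    simp [Fin.tail]

def S (a b : ℕ) : ℤ :=
  ∑ r ∈ Finset.range (a + b + 1), (-1 : ℤ) ^ r * (P a b r).card

lemma S_eq_sum {a b n : ℕ} (hn : a + b + 1 ≤ n) :
    S a b = ∑ r ∈ Finset.range n, (-1 : ℤ) ^ r * (P a b r).card := by
  refine Finset.sum_subset (Finset.range_subset_range.2 hn) fun r hr hr' => ?_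
  simp only [Finset.mem_range, not_lt] at hr'
  rw [P_eq_empty (by omega)]
  simp

lemma S00 : S 0 0 = 1 := by decide
lemma S10 : S 1 0 = -1 := by decide
lemma S01 : S 0 1 = -1 := by decide
lemma S11 : S 1 1 = 1 := by decide

lemma card_P_zero (a b : ℕ) :
    ((P a b 0).card : ℤ) = if a = 0 ∧ b = 0 then 1 else 0 := by
  by_cases h : a = 0 ∧ b = 0
  · obtain ⟨rfl, rfl⟩ := h
    simp only [if_pos (⟨rfl, rfl⟩ : (0:ℕ) = 0 ∧ (0:ℕ) = 0)]
    norm_num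
    decide
  · rw [if_neg h]
    have : P a b 0 = ∅ := by
      rw [Finset.eq_empty_iff_forall_notMem]
      intro f hf
      rw [mem_P] at hf
      simp only [Finset.univ_eq_empty, Finset.sum_empty] at hf
      exact h ⟨hf.2.1.symm, hf.2.2.symm⟩
    simp [this]

lemma S_rec (a b : ℕ) :
    S a b = (if a = 0 ∧ b = 0 then 1 else 0) -
      ∑ p ∈ (Finset.range (a + 1) ×ˢ Finset.range (b + 1)).erase (0, 0),
        S (a - p.1) (b - p.2) := by
  rw [S, Finset.sum_range_succ']
  simp only [pow_zero, one_mul, card_P_zero]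
  rw [add_comm]
  congr 1
  have : ∀ r, (-1 : ℤ) ^ (r + 1) * (P a b (r + 1)).card =
      -∑ p ∈ (Finset.range (a + 1) ×ˢ Finset.range (b + 1)).erase (0, 0),
        (-1 : ℤ) ^ r * (P (a - p.1) (b - p.2) r).card := by
    intro r
    rw [card_P_succ, pow_succ]
    push_cast
    rw [Finset.mul_sum, ← Finset.sum_neg_distrib]
    exact Finset.sum_congr rfl fun x _ => by ring
  calc ∑ r ∈ Finset.range (a + b), (-1 : ℤ) ^ (r + 1) * (P a b (r + 1)).card
      = ∑ r ∈ Finset.range (a + b),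
          -∑ p ∈ (Finset.range (a + 1) ×ˢ Finset.range (b + 1)).erase (0, 0),
            (-1 : ℤ) ^ r * (P (a - p.1) (b - p.2) r).card :=
        Finset.sum_congr rfl fun r _ => this r
    _ = -∑ p ∈ (Finset.range (a + 1) ×ˢ Finset.range (b + 1)).erase (0, 0),
          ∑ r ∈ Finset.range (a + b), (-1 : ℤ) ^ r * (P (a - p.1) (b - p.2) r).card := by
        simp only [← Finset.sum_neg_distrib]
        exact Finset.sum_comm
    _ = -∑ p ∈ (Finset.range (a + 1) ×ˢ Finset.range (b + 1)).erase (0, 0),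
          S (a - p.1) (b - p.2) := by
        congr 1
        refine Finset.sum_congr rfl fun p hp => ?_
        simp only [Finset.mem_erase, Finset.mem_product, Finset.mem_range, ne_eq,
          Prod.ext_iff, not_and] at hp
        refine (S_eq_sum ?_).symm
        rcases p with ⟨x, y⟩
        simp only at hp
        by_cases hx : x = 0
        · subst hx
          have : y ≠ 0 := fun hy => hp.1 rfl hy
          omega
        · omega

lemma sum_reindex (a b : ℕ) :
    ∑ p ∈ (Finset.range (a + 1) ×ˢ Finset.range (b + 1)).erase (0, 0),
        S (a - p.1) (b - p.2) =
      ∑ q ∈ (Finset.range (a + 1) ×ˢ Finset.range (b + 1)).erase (a, b),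
        S q.1 q.2 := by
  refine Finset.sum_nbij' (fun p => (a - p.1, b - p.2)) (fun q => (a - q.1, b - q.2))
    ?_ ?_ ?_ ?_ ?_
  · intro p hp
    simp only [Finset.mem_erase, Finset.mem_product, Finset.mem_range, ne_eq,
      Prod.ext_iff, not_and] at hp ⊢
    omega
  · intro q hq
    simp only [Finset.mem_erase, Finset.mem_product, Finset.mem_range, ne_eq,
      Prod.ext_iff, not_and] at hq ⊢
    omega
  · intro p hp
    simp only [Finset.mem_erase, Finset.mem_product, Finset.mem_range, ne_eq,
      Prod.ext_iff, not_and] at hp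
    simp only [Prod.ext_iff]
    constructor <;> omega
  · intro q hq
    simp only [Finset.mem_erase, Finset.mem_product, Finset.mem_range, ne_eq,
      Prod.ext_iff, not_and] at hq
    simp only [Prod.ext_iff]
    constructor <;> omega
  · intro p _
    rfl

lemma S_eq_zero (a b : ℕ) (h2 : 2 ≤ a ∨ 2 ≤ b) : S a b = 0 := by
  have key : ∀ n a b : ℕ, a + b = n → (2 ≤ a ∨ 2 ≤ b) → S a b = 0 := by
    intro n
    induction n using Nat.strong_induction_on with
    | _ n IH =>
      intro a b hab h2
      rw [S_rec, sum_reindex, if_neg (by omega), zero_sub, neg_eq_zero]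
      rw [← Finset.sum_filter_add_sum_filter_not
        ((Finset.range (a + 1) ×ˢ Finset.range (b + 1)).erase (a, b))
        (fun q => q.1 ≤ 1 ∧ q.2 ≤ 1)]
      have hbig : ∑ q ∈ ((Finset.range (a + 1) ×ˢ Finset.range (b + 1)).erase (a, b)).filter
          (fun q => ¬(q.1 ≤ 1 ∧ q.2 ≤ 1)), S q.1 q.2 = 0 := by
        refine Finset.sum_eq_zero fun q hq => ?_
        simp only [Finset.mem_filter, Finset.mem_erase, Finset.mem_product, Finset.mem_range,
          ne_eq, Prod.ext_iff, not_and, not_le] at hq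
        obtain ⟨⟨hne, hq1, hq2⟩, hsm⟩ := hq
        refine IH (q.1 + q.2) (by omega) q.1 q.2 rfl (by omega)
      rw [hbig, add_zero]
      have hsmall : ((Finset.range (a + 1) ×ˢ Finset.range (b + 1)).erase (a, b)).filter
          (fun q => q.1 ≤ 1 ∧ q.2 ≤ 1) =
          Finset.range (min (a + 1) 2) ×ˢ Finset.range (min (b + 1) 2) := by
        ext q
        simp only [Finset.mem_filter, Finset.mem_erase, Finset.mem_product, Finset.mem_range,
          ne_eq, Prod.ext_iff, not_and]
        omega
      rw [hsmall]
      rcases Nat.eq_zero_or_pos a with rfl | ha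
      · have hb : 2 ≤ b := by omega
        have : min (0 + 1) 2 = 1 := by omega
        rw [this]
        have : min (b + 1) 2 = 2 := by omega
        rw [this]
        rw [show (2 : ℕ) = 1 + 1 from rfl]
        simp [Finset.sum_product, Finset.sum_range_succ, S00, S01]
      · have : min (a + 1) 2 = 2 := by omega
        rw [this]
        rcases Nat.eq_zero_or_pos b with rfl | hb
        · have : min (0 + 1) 2 = 1 := by omega
          rw [this]
          simp [Finset.sum_product, Finset.sum_range_succ, S00, S10]
        · have : min (b + 1) 2 = 2 := by omega
          rw [this]
          rw [show (2 : ℕ) = 1 + 1 from rfl]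
          simp [Finset.sum_product, Finset.sum_range_succ, S00, S01, S10, S11]
  exact key (a + b) a b rfl h2



/-- The signed count of decompositions `(d, δ) = (d₀, δ₀) + (d₁, δ₁) + ⋯ + (d_r, δ_r)`
with all pairs `(d_i, δ_i)` (for `i ≥ 1`) nonzero, weighted by `(-1)^r`, vanishes
whenever `δ₀ < δ - 1` or `d₀ < d - 1`.  Since a tuple of `r` nonzero pairs summing
(together with `(d₀, δ₀)`) to `(d, δ)` forces `r ≤ d + δ`, the sum over all `r ≥ 0`
is captured by summing over `r ≤ R` for any `R ≥ d + δ`. -/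
theorem signed_count_decompositions_eq_zero (d δ d₀ δ₀ : ℕ)
    (h : δ₀ < δ - 1 ∨ d₀ < d - 1) (R : ℕ) (hR : d + δ ≤ R) :
    ∑ r ∈ Finset.range (R + 1),
      ∑ f ∈ (Fintype.piFinset
          (fun _ : Fin r => Finset.range (d + 1) ×ˢ Finset.range (δ + 1))).filter
          (fun f => (∀ i, f i ≠ (0, 0)) ∧
            d₀ + ∑ i, (f i).1 = d ∧ δ₀ + ∑ i, (f i).2 = δ),
        (-1 : ℤ) ^ r = 0 := by
  by_cases hc : d₀ ≤ d ∧ δ₀ ≤ δ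
  · obtain ⟨h1, h2⟩ := hc
    have hset : ∀ r : ℕ,
        (Fintype.piFinset
          (fun _ : Fin r => Finset.range (d + 1) ×ˢ Finset.range (δ + 1))).filter
          (fun f => (∀ i, f i ≠ (0, 0)) ∧
            d₀ + ∑ i, (f i).1 = d ∧ δ₀ + ∑ i, (f i).2 = δ) = P (d - d₀) (δ - δ₀) r := by
      intro r
      ext f
      simp only [Finset.mem_filter, Fintype.mem_piFinset, Finset.mem_product, Finset.mem_range,
        mem_P, ne_eq]
      constructor
      · rintro ⟨_, hne, hs1, hs2⟩
        exact ⟨hne, by omega, by omega⟩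
      · rintro ⟨hne, hs1, hs2⟩
        refine ⟨fun i => ⟨?_, ?_⟩, hne, by omega, by omega⟩
        · have := bound1 f i; omega
        · have := bound2 f i; omega
    calc ∑ r ∈ Finset.range (R + 1),
          ∑ f ∈ (Fintype.piFinset
            (fun _ : Fin r => Finset.range (d + 1) ×ˢ Finset.range (δ + 1))).filter
            (fun f => (∀ i, f i ≠ (0, 0)) ∧
              d₀ + ∑ i, (f i).1 = d ∧ δ₀ + ∑ i, (f i).2 = δ),
          (-1 : ℤ) ^ r
        = ∑ r ∈ Finset.range (R + 1), (-1 : ℤ) ^ r * (P (d - d₀) (δ - δ₀) r).card := by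
          refine Finset.sum_congr rfl fun r _ => ?_
          rw [hset r, Finset.sum_const, nsmul_eq_mul, mul_comm]
      _ = S (d - d₀) (δ - δ₀) := (S_eq_sum (by omega)).symm
      _ = 0 := S_eq_zero _ _ (by omega)
  · have hlt : d < d₀ ∨ δ < δ₀ := by omega
    refine Finset.sum_eq_zero fun r _ => ?_
    have : (Fintype.piFinset
          (fun _ : Fin r => Finset.range (d + 1) ×ˢ Finset.range (δ + 1))).filter
          (fun f => (∀ i, f i ≠ (0, 0)) ∧
            d₀ + ∑ i, (f i).1 = d ∧ δ₀ + ∑ i, (f i).2 = δ) = ∅ := by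
      rw [Finset.eq_empty_iff_forall_notMem]
      intro f hf
      simp only [Finset.mem_filter] at hf
      obtain ⟨_, _, hs1, hs2⟩ := hf
      omega
    rw [this, Finset.sum_empty]
end

section
/- Fix integers 0 < i₁ < i₂ < ⋯ < i_m < n and nonnegative integers d₁, …, d_m. Among all (I,d)-admissible sets of sequences there exists exactly one balanced one. -/
/-- `a` is an `(I, d)`-admissible set of sequences: `m` weakly increasing sequences of
nonnegative integers of lengths `I 0, …, I (m-1)`, with `a (k+1) j ≤ a k j` for
`j < I k`, and with `∑ j, a k j = d k`. -/
def IsAdmissible {m : ℕ} (I : Fin m → ℕ) (hI : Monotone I) (d : Fin m → ℕ)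
    (a : (k : Fin m) → Fin (I k) → ℕ) : Prop :=
  (∀ k : Fin m, Monotone (a k)) ∧
  (∀ (k : Fin m) (h : k.val + 1 < m) (j : Fin (I k)),
      a ⟨k.val + 1, h⟩
        (Fin.castLE (hI (show k ≤ (⟨k.val + 1, h⟩ : Fin m) from
          Fin.le_def.mpr (Nat.le_succ k.val))) j) ≤ a k j) ∧
  (∀ k : Fin m, ∑ j, a k j = d k)

/-- The quantity `∑_k ∑_{l < p} (a_{k,p} - a_{k,l})` minimized by balanced admissible
sets of sequences. -/
def spreadVal {m : ℕ} (I : Fin m → ℕ) (a : (k : Fin m) → Fin (I k) → ℕ) : ℕ :=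
  ∑ k : Fin m, ∑ p : Fin (I k),
    ∑ l ∈ Finset.univ.filter (fun l : Fin (I k) => l < p), (a k p - a k l)

open Finset

namespace BalancedAux


lemma card_tail (n v : ℕ) : ((Finset.univ : Finset (Fin n)).filter (fun j => v ≤ j.val)).card = n - v := by
  rcases lt_or_ge v n with h | h
  · have : (Finset.univ : Finset (Fin n)).filter (fun j => v ≤ j.val) = Finset.Ici (⟨v, h⟩ : Fin n) := by
      ext j; simp [Fin.le_def]
    rw [this, Fin.card_Ici]
  · have : (Finset.univ : Finset (Fin n)).filter (fun j => v ≤ j.val) = ∅ := by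
      ext j; simp; omega
    simp [this]; omega

/-- number of entries of `f` exceeding `t`. -/
def lev {n : ℕ} (f : Fin n → ℕ) (t : ℕ) : ℕ :=
  ((Finset.univ : Finset (Fin n)).filter (fun j => t < f j)).card

lemma lev_le {n : ℕ} (f : Fin n → ℕ) (t : ℕ) : lev f t ≤ n := by
  classical
  calc lev f t ≤ (Finset.univ : Finset (Fin n)).card := Finset.card_filter_le _ _
  _ = n := by simp

lemma lev_antitone {n : ℕ} (f : Fin n → ℕ) : Antitone (lev f) := by
  intro t t' h
  apply Finset.card_le_card
  intro j hj
  simp only [Finset.mem_filter] at *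
  exact ⟨hj.1, lt_of_le_of_lt h hj.2⟩

/-- key: for a monotone row, membership in a level set is determined by the count. -/
lemma mem_lev_iff {n : ℕ} {f : Fin n → ℕ} (hf : Monotone f) (t : ℕ) (j : Fin n) :
    t < f j ↔ n ≤ lev f t + j.val := by
  constructor
  · intro h
    have hsub : (Finset.univ : Finset (Fin n)).filter (fun l => (j : ℕ) ≤ l.val) ⊆
        (Finset.univ : Finset (Fin n)).filter (fun l => t < f l) := by
      intro l hl
      simp only [Finset.mem_filter] at *
      exact ⟨hl.1, lt_of_lt_of_le h (hf (Fin.le_def.mpr hl.2))⟩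
    have := Finset.card_le_card hsub
    rw [card_tail] at this
    have hj : (j : ℕ) < n := j.isLt
    unfold lev; omega
  · intro h
    by_contra hc
    push_neg at hc
    have hsub : (Finset.univ : Finset (Fin n)).filter (fun l => t < f l) ⊆
        (Finset.univ : Finset (Fin n)).filter (fun l => (j : ℕ) + 1 ≤ l.val) := by
      intro l hl
      simp only [Finset.mem_filter] at *
      refine ⟨hl.1, ?_⟩
      by_contra hlj
      push_neg at hlj
      have : f l ≤ f j := hf (Fin.le_def.mpr (by omega))
      omega
    have := Finset.card_le_card hsub
    rw [card_tail] at this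
    have hj : (j : ℕ) < n := j.isLt
    unfold lev at *; omega

lemma lev_eq_zero {n : ℕ} (f : Fin n → ℕ) (N t : ℕ) (hb : ∀ j, f j ≤ N) (ht : N ≤ t) :
    lev f t = 0 := by
  unfold lev
  rw [Finset.card_eq_zero]
  ext j; simp only [Finset.mem_filter, Finset.mem_univ, true_and, Finset.notMem_empty, iff_false]
  have := hb j; omega



lemma sum_eq_sum_lev {n : ℕ} (f : Fin n → ℕ) (N : ℕ) (hb : ∀ j, f j ≤ N) :
    ∑ j, f j = ∑ t ∈ range N, lev f t := by
  unfold lev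
  have h1 : ∀ t, ((Finset.univ : Finset (Fin n)).filter (fun j => t < f j)).card
      = ∑ j : Fin n, if t < f j then 1 else 0 := by
    intro t; rw [Finset.card_filter]
  simp_rw [h1]
  rw [Finset.sum_comm]
  congr 1
  ext j
  have h2 : ∑ t ∈ range N, (if t < f j then 1 else 0) = ∑ t ∈ range N, (if t ∈ range (f j) then 1 else 0) := by
    apply Finset.sum_congr rfl; intro t ht; simp [Finset.mem_range]
  rw [h2, Finset.sum_ite_mem, Finset.inter_eq_right.mpr, Finset.sum_const, smul_eq_mul, mul_one, card_range]
  intro t ht; simp only [Finset.mem_range] at *; exact lt_of_lt_of_le ht (hb j)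


lemma spread_row {n : ℕ} (f : Fin n → ℕ) (hf : Monotone f) (N : ℕ) (hb : ∀ j, f j ≤ N) :
    ∑ p : Fin n, ∑ l ∈ Finset.univ.filter (fun l : Fin n => l < p), (f p - f l)
      = ∑ t ∈ range N, ((Finset.univ : Finset (Fin n)).filter (fun j => t < f j)).card *
          (n - ((Finset.univ : Finset (Fin n)).filter (fun j => t < f j)).card) := by
  have key : ∀ (l p : Fin n), f p - f l = ∑ t ∈ range N, (if f l ≤ t then 1 else 0) * (if t < f p then 1 else 0) := by
    intro l p
    have : ∀ t, (if f l ≤ t then 1 else 0) * (if t < f p then 1 else 0)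
        = if t ∈ Finset.Ico (f l) (f p) then 1 else 0 := by
      intro t; by_cases h1 : f l ≤ t <;> by_cases h2 : t < f p <;> simp [h1, h2, Finset.mem_Ico]
    simp_rw [this]
    rw [Finset.sum_ite_mem, Finset.inter_eq_right.mpr, Finset.sum_const, smul_eq_mul, mul_one, Nat.card_Ico]
    intro t ht
    simp only [Finset.mem_Ico, Finset.mem_range] at *
    exact lt_of_lt_of_le ht.2 (hb p)
  simp_rw [key]
  have inner : ∀ p : Fin n, ∑ l ∈ Finset.univ.filter (fun l : Fin n => l < p),
      ∑ t ∈ range N, (if f l ≤ t then 1 else 0) * (if t < f p then 1 else 0)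
      = ∑ t ∈ range N, ∑ l ∈ Finset.univ.filter (fun l : Fin n => l < p),
          (if f l ≤ t then 1 else 0) * (if t < f p then 1 else 0) := fun p => Finset.sum_comm
  simp_rw [inner]
  rw [Finset.sum_comm]
  apply Finset.sum_congr rfl
  intro t _
  have step : ∀ p : Fin n, ∑ l ∈ Finset.univ.filter (fun l : Fin n => l < p),
      (if f l ≤ t then 1 else 0) * (if t < f p then 1 else 0)
      = (if t < f p then 1 else 0) * ((Finset.univ : Finset (Fin n)).filter (fun j => ¬ t < f j)).card := by
    intro p
    by_cases hp : t < f p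
    · simp only [hp, if_true, mul_one, one_mul]
      rw [← Finset.card_filter]
      rw [Finset.filter_filter]
      congr 1
      ext l
      simp only [Finset.mem_filter, Finset.mem_univ, true_and, not_lt]
      constructor
      · rintro ⟨_, h⟩; exact h
      · intro h
        refine ⟨?_, h⟩
        by_contra hlp
        have : f p ≤ f l := hf (le_of_not_gt hlp)
        omega
    · simp [hp]
  simp_rw [step]
  rw [← Finset.sum_mul, ← Finset.card_filter]
  congr 1
  have := Finset.card_filter_add_card_filter_not (s := (Finset.univ : Finset (Fin n)))
    (p := fun j => t < f j)
  simp only [Finset.card_univ, Fintype.card_fin] at this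
  omega


variable (m : ℕ) (I' d' : ℕ → ℕ)

def Pg : ℕ → ℕ → ℕ
  | 0 => fun M => min (d' 0) (M * I' 0)
  | (k+1) => fun M => min (d' (k+1)) (Pg k M + M * (I' (k+1) - I' k))

lemma Pg_zero (k : ℕ) : Pg I' d' k 0 = 0 := by
  induction k with
  | zero => simp [Pg]
  | succ k ih => simp [Pg, ih]

lemma Pg_le_d (k M : ℕ) : Pg I' d' k M ≤ d' k := by
  cases k <;> simp [Pg]

lemma Pg_mono (k : ℕ) {M M' : ℕ} (h : M ≤ M') : Pg I' d' k M ≤ Pg I' d' k M' := by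
  induction k with
  | zero => simp only [Pg]; exact min_le_min le_rfl (Nat.mul_le_mul_right _ h)
  | succ k ih =>
    simp only [Pg]
    exact min_le_min le_rfl (Nat.add_le_add ih (Nat.mul_le_mul_right _ h))

lemma Pg_concave (k M : ℕ) :
    Pg I' d' k (M + 2) + Pg I' d' k M ≤ 2 * Pg I' d' k (M + 1) := by
  induction k with
  | zero =>
    simp only [Pg]
    have h : (M + 2) * I' 0 + M * I' 0 = 2 * ((M + 1) * I' 0) := by ring
    omega
  | succ k ih =>
    simp only [Pg]
    have h : (M + 2) * (I' (k+1) - I' k) + M * (I' (k+1) - I' k)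
        = 2 * ((M + 1) * (I' (k+1) - I' k)) := by ring
    omega

lemma Pg_eq_d (hI0 : 0 < I' 0) (hIs : ∀ r, 0 < I' (r+1) - I' r) (k M : ℕ) (hM : d' k ≤ M) :
    Pg I' d' k M = d' k := by
  cases k with
  | zero =>
    simp only [Pg]
    have : M * 1 ≤ M * I' 0 := Nat.mul_le_mul_left _ hI0
    omega
  | succ k =>
    simp only [Pg]
    have h1 : M * 1 ≤ M * (I' (k+1) - I' k) := Nat.mul_le_mul_left _ (hIs k)
    omega

def gg (k t : ℕ) : ℕ := Pg I' d' k (t + 1) - Pg I' d' k t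

lemma sum_gg (k M : ℕ) : ∑ t ∈ range M, gg I' d' k t = Pg I' d' k M := by
  induction M with
  | zero => simp [Pg_zero]
  | succ M ih =>
    rw [Finset.sum_range_succ, ih]
    have := Pg_mono I' d' k (show M ≤ M + 1 by omega)
    unfold gg; omega

lemma gg_antitone (k : ℕ) : ∀ {t t' : ℕ}, t ≤ t' → gg I' d' k t' ≤ gg I' d' k t := by
  have dec : ∀ t, gg I' d' k (t+1) ≤ gg I' d' k t := by
    intro t
    have h1 := Pg_concave I' d' k t
    have h2 := Pg_mono I' d' k (show t ≤ t + 1 by omega)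
    have h3 := Pg_mono I' d' k (show t + 1 ≤ t + 2 by omega)
    unfold gg
    have e : t + 1 + 1 = t + 2 := rfl
    rw [e]
    omega
  intro t t' h
  induction h with
  | refl => exact le_rfl
  | step h ih => exact le_trans (dec _) ih

lemma Pg_one_le (hI0 : 0 < I' 0) (hImono : ∀ r, I' r ≤ I' (r+1)) (k : ℕ) :
    Pg I' d' k 1 ≤ I' k := by
  induction k with
  | zero => simp only [Pg]; omega
  | succ k ih =>
    simp only [Pg]
    have h := hImono k
    have : Pg I' d' k 1 + 1 * (I' (k+1) - I' k) ≤ I' (k+1) := by omega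
    omega

lemma gg_le_I (hI0 : 0 < I' 0) (hImono : ∀ r, I' r ≤ I' (r+1)) (k t : ℕ) :
    gg I' d' k t ≤ I' k := by
  have h1 : gg I' d' k t ≤ gg I' d' k 0 := gg_antitone I' d' k (Nat.zero_le t)
  have h2 : gg I' d' k 0 = Pg I' d' k 1 := by simp [gg, Pg_zero]
  have := Pg_one_le I' d' hI0 hImono k
  omega

lemma gg_cross (k t : ℕ) :
    gg I' d' (k+1) t ≤ gg I' d' k t + (I' (k+1) - I' k) := by
  unfold gg
  simp only [Pg]
  have h1 := Pg_mono I' d' k (show t ≤ t + 1 by omega)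
  have h2 : (t + 1) * (I' (k+1) - I' k) = t * (I' (k+1) - I' k) + (I' (k+1) - I' k) := by ring
  omega

lemma gg_support (hI0 : 0 < I' 0) (hIs : ∀ r, 0 < I' (r+1) - I' r) (k t : ℕ) (ht : d' k ≤ t) :
    gg I' d' k t = 0 := by
  unfold gg
  rw [Pg_eq_d I' d' hI0 hIs k t ht, Pg_eq_d I' d' hI0 hIs k (t+1) (by omega)]
  omega


lemma anti_of_succ {f : ℕ → ℕ} (h : ∀ t, f (t+1) ≤ f t) : ∀ {s s' : ℕ}, s ≤ s' → f s' ≤ f s := by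
  intro s s' hss
  induction hss with
  | refl => exact le_rfl
  | step h' ih => exact le_trans (h _) ih

lemma row_sq (N : ℕ) (x y : ℕ → ℕ) (hx : ∀ t, x (t+1) ≤ x t) (hy : ∀ t, y (t+1) ≤ y t)
    (hpre : ∀ M, M ≤ N → ∑ t ∈ range M, x t ≤ ∑ t ∈ range M, y t)
    (hsum : ∑ t ∈ range N, x t = ∑ t ∈ range N, y t) :
    ∑ t ∈ range N, x t * x t ≤ ∑ t ∈ range N, y t * y t ∧
      (∑ t ∈ range N, x t * x t = ∑ t ∈ range N, y t * y t → ∀ t < N, x t = y t) := by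
  set w : ℕ → ℤ := fun t => (x t : ℤ) + y t with hw
  set e : ℕ → ℤ := fun t => (y t : ℤ) - x t with he
  set D : ℕ → ℤ := fun M => ∑ j ∈ range M, e j with hD
  have hD0 : ∀ M, M ≤ N → 0 ≤ D M := by
    intro M hM
    have := hpre M hM
    simp only [hD, he]
    rw [Finset.sum_sub_distrib]
    push_cast
    have : ((∑ t ∈ range M, x t : ℕ) : ℤ) ≤ ((∑ t ∈ range M, y t : ℕ) : ℤ) := by exact_mod_cast this
    push_cast at this
    omega
  have hDN : D N = 0 := by
    simp only [hD, he]
    rw [Finset.sum_sub_distrib]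
    have : ((∑ t ∈ range N, x t : ℕ) : ℤ) = ((∑ t ∈ range N, y t : ℕ) : ℤ) := by exact_mod_cast hsum
    push_cast at this
    omega
  have hparts := Finset.sum_range_by_parts w e N
  simp only [smul_eq_mul] at hparts
  have hDdef : ∀ i, ∑ j ∈ range (i+1), e j = D (i+1) := fun i => rfl
  have hwe : ∑ i ∈ range N, w i * e i
      = ∑ i ∈ range (N-1), (w i - w (i+1)) * D (i+1) := by
    rw [hparts]
    have : (∑ i ∈ range N, e i) = D N := rfl
    rw [this, hDN, mul_zero, zero_sub]
    rw [← Finset.sum_neg_distrib]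
    apply Finset.sum_congr rfl
    intro i _
    rw [hDdef]
    ring
  have hterm : ∀ i ∈ range (N-1), 0 ≤ (w i - w (i+1)) * D (i+1) := by
    intro i hi
    simp only [Finset.mem_range] at hi
    apply mul_nonneg
    · have hxi := hx i; have hyi := hy i
      simp only [hw]; push_cast; omega
    · exact hD0 (i+1) (by omega)
  have hsq : ∀ t, w t * e t = (y t : ℤ) * y t - (x t : ℤ) * x t := by
    intro t; simp only [hw, he]; ring
  have hmain : (∑ t ∈ range N, (x t : ℤ) * x t) ≤ ∑ t ∈ range N, (y t : ℤ) * y t := by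
    have h1 : 0 ≤ ∑ i ∈ range N, w i * e i := by
      rw [hwe]; exact Finset.sum_nonneg hterm
    have h2 : ∑ i ∈ range N, w i * e i
        = (∑ t ∈ range N, (y t : ℤ) * y t) - ∑ t ∈ range N, (x t : ℤ) * x t := by
      rw [← Finset.sum_sub_distrib]
      exact Finset.sum_congr rfl (fun t _ => hsq t)
    omega
  constructor
  · exact_mod_cast hmain
  · intro heq
    have hze : ∑ i ∈ range N, w i * e i = 0 := by
      have h2 : ∑ i ∈ range N, w i * e i
          = (∑ t ∈ range N, (y t : ℤ) * y t) - ∑ t ∈ range N, (x t : ℤ) * x t := by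
        rw [← Finset.sum_sub_distrib]
        exact Finset.sum_congr rfl (fun t _ => hsq t)
      have : ((∑ t ∈ range N, x t * x t : ℕ) : ℤ) = ((∑ t ∈ range N, y t * y t : ℕ) : ℤ) := by
        exact_mod_cast heq
      push_cast at this
      omega
    have hallz : ∀ i ∈ range (N-1), (w i - w (i+1)) * D (i+1) = 0 := by
      rw [hwe] at hze
      exact (Finset.sum_eq_zero_iff_of_nonneg hterm).mp hze
    -- now the combinatorial contradiction
    by_contra hcon
    push_neg at hcon
    obtain ⟨tw, htwN, htw⟩ := hcon
    have hex : ∃ t, x t ≠ y t := ⟨tw, htw⟩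
    classical
    set t0 := Nat.find hex with ht0def
    have ht0 : x t0 ≠ y t0 := Nat.find_spec hex
    have ht0min : ∀ t < t0, x t = y t := by
      intro t ht
      by_contra hne
      have := Nat.find_le (h := hex) hne
      omega
    have ht0N : t0 < N := lt_of_le_of_lt (Nat.find_le htw) htwN
    have hDt0 : D t0 = 0 := by
      simp only [hD, he]
      apply Finset.sum_eq_zero
      intro j hj
      simp only [Finset.mem_range] at hj
      rw [ht0min j hj]; ring
    have hDt01 : 0 < D (t0 + 1) := by
      have h1 : D (t0 + 1) = D t0 + e t0 := Finset.sum_range_succ e t0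
      have h2 : 0 ≤ D (t0 + 1) := hD0 _ (by omega)
      have h3 : e t0 ≠ 0 := by simp only [he]; intro hc; apply ht0; omega
      rw [h1, hDt0, zero_add]
      rcases lt_or_gt_of_ne h3 with h | h
      · exfalso; rw [h1, hDt0, zero_add] at h2; omega
      · exact h
    -- v : least M ≥ t0+1 with D M = 0
    have hexv : ∃ u, D (t0 + 1 + u) = 0 := ⟨N - (t0 + 1), by rw [show t0 + 1 + (N - (t0+1)) = N by omega]; exact hDN⟩
    set u0 := Nat.find hexv with hu0def
    set v := t0 + 1 + u0 with hvdef
    have hDv : D v = 0 := Nat.find_spec hexv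
    have hvpos : ∀ M, t0 + 1 ≤ M → M < v → D M ≠ 0 := by
      intro M h1 h2 hc
      have : u0 ≤ M - (t0 + 1) := Nat.find_le (by rw [show t0 + 1 + (M - (t0+1)) = M by omega]; exact hc)
      omega
    have hvN : v ≤ N := by
      by_contra hc
      push_neg at hc
      exact hvpos N (by omega) (by omega) hDN
    have hvge : t0 + 2 ≤ v := by
      rcases Nat.lt_or_ge v (t0 + 2) with h | h
      · exfalso
        have : v = t0 + 1 := by omega
        rw [this] at hDv; omega
      · exact h
    -- w is constant on [t0, v-1]
    have hwconst : ∀ s, t0 ≤ s → s ≤ v - 1 → w s = w t0 := by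
      intro s hs1 hs2
      induction s with
      | zero => have : t0 = 0 := by omega
                rw [this]
      | succ s ih =>
        rcases Nat.lt_or_ge s t0 with h | h
        · have : t0 = s + 1 := by omega
          rw [this]
        · have hws : w s = w t0 := ih h (by omega)
          have hDs1 : D (s + 1) ≠ 0 := hvpos (s+1) (by omega) (by omega)
          have hiN : s ∈ range (N - 1) := by simp only [Finset.mem_range]; omega
          have := hallz s hiN
          have : w s - w (s + 1) = 0 := by
            rcases mul_eq_zero.mp this with h' | h'
            · exact h'
            · exact absurd h' hDs1
          omega
    have hwv : w (v - 1) = w t0 := hwconst (v-1) (by omega) le_rfl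
    have hev : e (v - 1) < 0 := by
      have h1 : D ((v-1)+1) = D (v - 1) + e (v - 1) := Finset.sum_range_succ e (v-1)
      rw [show (v-1)+1 = v from by omega] at h1
      have h2 : D (v - 1) ≠ 0 := hvpos (v-1) (by omega) (by omega)
      have h3 : 0 ≤ D (v - 1) := hD0 _ (by omega)
      omega
    -- contradictions
    have hxv : x (v - 1) ≤ x t0 := anti_of_succ hx (by omega)
    have hyv : y (v - 1) ≤ y t0 := anti_of_succ hy (by omega)
    have h1 : (x t0 : ℤ) < y t0 := by
      have hsucc : D (t0 + 1) = D t0 + e t0 := Finset.sum_range_succ e t0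
      simp only [he] at hsucc
      omega
    have h2 : (y (v-1) : ℤ) < x (v-1) := by simp only [he] at hev; omega
    simp only [hw] at hwv
    have hxv' : (x (v-1) : ℤ) ≤ x t0 := by exact_mod_cast hxv
    have hyv' : (y (v-1) : ℤ) ≤ y t0 := by exact_mod_cast hyv
    omega

lemma dc_count (N : ℕ) (P : ℕ → Prop) [DecidablePred P]
    (hP : ∀ {τ τ' : ℕ}, τ ≤ τ' → P τ' → P τ) (t : ℕ) :
    t < ((range N).filter P).card ↔ (t < N ∧ P t) := by
  constructor
  · intro h
    by_contra hc
    rw [not_and_or] at hc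
    rcases hc with hc | hc
    · have : ((range N).filter P) ⊆ range N := Finset.filter_subset _ _
      have := Finset.card_le_card this
      simp only [Finset.card_range] at this
      omega
    · have hsub : ((range N).filter P) ⊆ range t := by
        intro σ hσ
        simp only [Finset.mem_filter, Finset.mem_range] at *
        by_contra hσt
        exact hc (hP (by omega) hσ.2)
      have := Finset.card_le_card hsub
      simp only [Finset.card_range] at this
      omega
  · rintro ⟨h1, h2⟩
    have hsub : range (t+1) ⊆ (range N).filter P := by
      intro σ hσ
      simp only [Finset.mem_filter, Finset.mem_range] at *
      exact ⟨by omega, hP (by omega) h2⟩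
    have := Finset.card_le_card hsub
    simp only [Finset.card_range] at this
    omega

lemma lev_cross_count {n n' : ℕ} (hnn : n ≤ n') (f : Fin n → ℕ) (g : Fin n' → ℕ)
    (hcross : ∀ j : Fin n, g (Fin.castLE hnn j) ≤ f j) (t : ℕ) :
    ((Finset.univ : Finset (Fin n')).filter (fun j => t < g j)).card
      ≤ ((Finset.univ : Finset (Fin n)).filter (fun j => t < f j)).card + (n' - n) := by
  classical
  set S := (Finset.univ : Finset (Fin n')).filter (fun j => t < g j) with hS
  have hsplit := Finset.card_filter_add_card_filter_not
    (s := S) (p := fun j : Fin n' => (j : ℕ) < n)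
  have h2 : (S.filter (fun j : Fin n' => ¬ (j : ℕ) < n)).card ≤ n' - n := by
    have hsub : S.filter (fun j : Fin n' => ¬ (j : ℕ) < n)
        ⊆ (Finset.univ : Finset (Fin n')).filter (fun j => n ≤ (j : ℕ)) := by
      intro j hj
      simp only [Finset.mem_filter, Finset.mem_univ, true_and, not_lt, hS] at *
      exact hj.2
    have := Finset.card_le_card hsub
    rw [card_tail] at this
    exact this
  have h1 : (S.filter (fun j : Fin n' => (j : ℕ) < n)).card
      ≤ ((Finset.univ : Finset (Fin n)).filter (fun j => t < f j)).card := by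
    rcases Nat.eq_zero_or_pos n with hn | hn
    · have : S.filter (fun j : Fin n' => (j : ℕ) < n) = ∅ := by
        ext j; simp only [Finset.mem_filter, Finset.notMem_empty, iff_false, not_and]
        intro _; omega
      simp [this]
    · apply Finset.card_le_card_of_injOn
        (f := fun j : Fin n' => if h : (j:ℕ) < n then (⟨(j:ℕ), h⟩ : Fin n) else ⟨0, hn⟩)
      · intro j hj
        simp only [Finset.mem_coe, Finset.mem_filter, Finset.mem_univ, true_and, hS] at hj ⊢
        rcases hj with ⟨htg, hjn⟩
        rw [dif_pos hjn]
        have hc := hcross ⟨(j:ℕ), hjn⟩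
        have heq2 : Fin.castLE hnn (⟨(j:ℕ), hjn⟩ : Fin n) = j := by
          apply Fin.ext; simp
        rw [heq2] at hc
        omega
      · intro j1 hj1 j2 hj2 heq
        simp only [Finset.mem_coe, Finset.mem_filter] at hj1 hj2
        simp only [dif_pos hj1.2, dif_pos hj2.2] at heq
        apply Fin.ext
        have : ((⟨(j1:ℕ), hj1.2⟩ : Fin n) : ℕ) = ((⟨(j2:ℕ), hj2.2⟩ : Fin n) : ℕ) := by rw [heq]
        simpa using this
  omega


def Iext (m : ℕ) (I : Fin m → ℕ) : ℕ → ℕ :=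
  fun r => if h : r < m then I ⟨r, h⟩ else r + 1 - m + Finset.univ.sup I

def dext (m : ℕ) (d : Fin m → ℕ) : ℕ → ℕ :=
  fun r => if h : r < m then d ⟨r, h⟩ else 0

def Nbig (m : ℕ) (d : Fin m → ℕ) : ℕ := (∑ k, d k) + 1

def ahat (m : ℕ) (I : Fin m → ℕ) (d : Fin m → ℕ) (k : Fin m) (j : Fin (I k)) : ℕ :=
  ((range (Nbig m d)).filter
    (fun t => I k ≤ gg (Iext m I) (dext m d) k.val t + j.val)).card

section Main

variable {m : ℕ} {I : Fin m → ℕ} {d : Fin m → ℕ}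

lemma Iext_at (k : Fin m) : Iext m I k.val = I k := by
  unfold Iext
  rw [dif_pos k.isLt]

lemma dext_at (k : Fin m) : dext m d k.val = d k := by
  unfold dext
  rw [dif_pos k.isLt]

lemma Iext_pos (hpos : ∀ k, 0 < I k) : 0 < Iext m I 0 := by
  unfold Iext
  split
  · exact hpos _
  · omega

lemma Iext_step (hmono : StrictMono I) : ∀ r, Iext m I r < Iext m I (r+1) := by
  intro r
  unfold Iext
  by_cases h1 : r + 1 < m
  · have hr : r < m := by omega
    rw [dif_pos hr, dif_pos h1]
    exact hmono (show (⟨r,hr⟩ : Fin m) < ⟨r+1,h1⟩ from by simp [Fin.lt_def])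
  · by_cases h2 : r < m
    · rw [dif_pos h2, dif_neg h1]
      have := Finset.le_sup (f := I) (Finset.mem_univ ⟨r, h2⟩)
      omega
    · rw [dif_neg h2, dif_neg h1]
      omega

lemma Iext_sub_pos (hmono : StrictMono I) : ∀ r, 0 < Iext m I (r+1) - Iext m I r := by
  intro r; have := Iext_step (I := I) hmono r; omega

lemma Iext_mono (hmono : StrictMono I) : ∀ r, Iext m I r ≤ Iext m I (r+1) := by
  intro r; exact le_of_lt (Iext_step hmono r)

lemma d_lt_Nbig (k : Fin m) : d k < Nbig m d := by
  unfold Nbig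
  have h : d k ≤ ∑ k, d k := Finset.single_le_sum (fun i _ => Nat.zero_le _) (Finset.mem_univ k)
  omega

lemma entry_le {hI : Monotone I} {b : (k : Fin m) → Fin (I k) → ℕ}
    (hb : IsAdmissible I hI d b) (k : Fin m) (j : Fin (I k)) : b k j ≤ d k := by
  have h1 := hb.2.2 k
  have h2 : b k j ≤ ∑ j', b k j' := Finset.single_le_sum (fun i _ => Nat.zero_le _) (Finset.mem_univ j)
  omega

lemma sum_lev_le_d {hI : Monotone I} {b : (k : Fin m) → Fin (I k) → ℕ}
    (hb : IsAdmissible I hI d b) (k : Fin m) (M : ℕ) :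
    ∑ t ∈ range M, lev (b k) t ≤ d k := by
  have hbound : ∀ j, b k j ≤ max M (Nbig m d) := by
    intro j
    have := entry_le hb k j
    have := d_lt_Nbig (d := d) k
    omega
  have h1 : ∑ t ∈ range M, lev (b k) t ≤ ∑ t ∈ range (max M (Nbig m d)), lev (b k) t := by
    apply Finset.sum_le_sum_of_subset
    exact Finset.range_subset_range.mpr (le_max_left _ _)
  have h2 : ∑ t ∈ range (max M (Nbig m d)), lev (b k) t = d k := by
    rw [← sum_eq_sum_lev (b k) _ hbound]
    exact hb.2.2 k
  omega

lemma lev_sum_N {hI : Monotone I} {b : (k : Fin m) → Fin (I k) → ℕ}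
    (hb : IsAdmissible I hI d b) (k : Fin m) :
    ∑ t ∈ range (Nbig m d), lev (b k) t = d k := by
  rw [← sum_eq_sum_lev (b k) _ (fun j => by
    have := entry_le hb k j; have := d_lt_Nbig (d := d) k; omega)]
  exact hb.2.2 k

lemma prefix_dom {hI : Monotone I} {b : (k : Fin m) → Fin (I k) → ℕ}
    (hb : IsAdmissible I hI d b) :
    ∀ r (hr : r < m) (M : ℕ),
      ∑ t ∈ range M, lev (b ⟨r, hr⟩) t ≤ Pg (Iext m I) (dext m d) r M := by
  intro r
  induction r with
  | zero =>
    intro hr M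
    simp only [Pg]
    apply le_min
    · rw [show dext m d 0 = d ⟨0, hr⟩ from dext_at (⟨0, hr⟩ : Fin m)]
      exact sum_lev_le_d hb _ M
    · have hcard : ∀ t ∈ range M, lev (b ⟨0, hr⟩) t ≤ Iext m I 0 := by
        intro t _
        rw [show Iext m I 0 = I ⟨0, hr⟩ from Iext_at (⟨0, hr⟩ : Fin m)]
        exact lev_le _ _
      calc ∑ t ∈ range M, lev (b ⟨0, hr⟩) t ≤ (range M).card * Iext m I 0 := by
            have := Finset.sum_le_card_nsmul (range M) _ _ hcard
            simpa using this
        _ = M * Iext m I 0 := by rw [card_range]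
  | succ r ih =>
    intro hr M
    have hr' : r < m := by omega
    simp only [Pg]
    apply le_min
    · rw [show dext m d (r+1) = d ⟨r+1, hr⟩ from dext_at (⟨r+1, hr⟩ : Fin m)]
      exact sum_lev_le_d hb _ M
    · have hcross : ∀ t, lev (b ⟨r+1, hr⟩) t ≤ lev (b ⟨r, hr'⟩) t + (I ⟨r+1, hr⟩ - I ⟨r, hr'⟩) := by
        intro t
        apply lev_cross_count (hnn := hI (show (⟨r,hr'⟩:Fin m) ≤ ⟨r+1,hr⟩ from Fin.mk_le_mk.mpr (by omega)))
        intro j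
        exact hb.2.1 ⟨r, hr'⟩ hr j
      calc ∑ t ∈ range M, lev (b ⟨r+1, hr⟩) t
          ≤ ∑ t ∈ range M, (lev (b ⟨r, hr'⟩) t + (I ⟨r+1, hr⟩ - I ⟨r, hr'⟩)) :=
            Finset.sum_le_sum (fun t _ => hcross t)
        _ = (∑ t ∈ range M, lev (b ⟨r, hr'⟩) t) + M * (I ⟨r+1, hr⟩ - I ⟨r, hr'⟩) := by
            rw [Finset.sum_add_distrib, Finset.sum_const, card_range, smul_eq_mul]
        _ ≤ Pg (Iext m I) (dext m d) r M + M * (Iext m I (r+1) - Iext m I r) := by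
            have h1 := ih hr' M
            rw [show Iext m I (r+1) = I ⟨r+1, hr⟩ from Iext_at (⟨r+1, hr⟩ : Fin m),
              show Iext m I r = I ⟨r, hr'⟩ from Iext_at (⟨r, hr'⟩ : Fin m)]
            omega

end Main

section Main2

variable {m : ℕ} {I : Fin m → ℕ} {d : Fin m → ℕ}

lemma gg_sum_N (hmono : StrictMono I) (hpos : ∀ k, 0 < I k) (k : Fin m) :
    ∑ t ∈ range (Nbig m d), gg (Iext m I) (dext m d) k.val t = d k := by
  have h1 : dext m d k.val ≤ Nbig m d := by
    rw [dext_at k]; exact le_of_lt (d_lt_Nbig k)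
  rw [sum_gg, Pg_eq_d _ _ (Iext_pos hpos) (Iext_sub_pos hmono) _ _ h1, dext_at]

lemma gg_le_I' (hmono : StrictMono I) (hpos : ∀ k, 0 < I k) (k : Fin m) (t : ℕ) :
    gg (Iext m I) (dext m d) k.val t ≤ I k := by
  have := gg_le_I (Iext m I) (dext m d) (Iext_pos hpos) (Iext_mono hmono) k.val t
  rwa [Iext_at] at this

lemma gg_pos_lt (hmono : StrictMono I) (hpos : ∀ k, 0 < I k) (k : Fin m) (t : ℕ)
    (h : 0 < gg (Iext m I) (dext m d) k.val t) : t < Nbig m d := by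
  by_contra hc
  push_neg at hc
  have h2 : dext m d k.val ≤ t := by
    rw [dext_at k]
    have := d_lt_Nbig (d := d) k
    omega
  have := gg_support (Iext m I) (dext m d) (Iext_pos hpos) (Iext_sub_pos hmono) k.val t h2
  omega

lemma ahat_lt_iff (hmono : StrictMono I) (hpos : ∀ k, 0 < I k) (k : Fin m) (j : Fin (I k)) (t : ℕ) :
    t < ahat m I d k j ↔ I k ≤ gg (Iext m I) (dext m d) k.val t + j.val := by
  unfold ahat
  rw [dc_count _ _ (fun {τ τ'} hττ hc => by
    have := gg_antitone (Iext m I) (dext m d) k.val hττ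
    omega)]
  constructor
  · rintro ⟨_, h⟩; exact h
  · intro h
    refine ⟨?_, h⟩
    have hj : j.val < I k := j.isLt
    exact gg_pos_lt hmono hpos k t (by omega)

lemma ahat_mono (hmono : StrictMono I) (hpos : ∀ k, 0 < I k) (k : Fin m) :
    Monotone (ahat m I d k) := by
  intro j j' hjj
  unfold ahat
  apply Finset.card_le_card
  intro t ht
  simp only [Finset.mem_filter] at *
  have : j.val ≤ j'.val := hjj
  exact ⟨ht.1, by omega⟩

lemma ahat_le_N (k : Fin m) (j : Fin (I k)) : ahat m I d k j ≤ Nbig m d := by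
  unfold ahat
  calc _ ≤ (range (Nbig m d)).card := Finset.card_filter_le _ _
    _ = Nbig m d := card_range _

lemma lev_ahat (hmono : StrictMono I) (hpos : ∀ k, 0 < I k) (k : Fin m) (t : ℕ) :
    lev (ahat m I d k) t = gg (Iext m I) (dext m d) k.val t := by
  unfold lev
  have hiff : ∀ j : Fin (I k), (t < ahat m I d k j) ↔ ((I k - gg (Iext m I) (dext m d) k.val t) ≤ j.val) := by
    intro j
    rw [ahat_lt_iff hmono hpos]
    have hj : j.val < I k := j.isLt
    omega
  have heq : (Finset.univ : Finset (Fin (I k))).filter (fun j => t < ahat m I d k j)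
      = (Finset.univ : Finset (Fin (I k))).filter
          (fun j => (I k - gg (Iext m I) (dext m d) k.val t) ≤ j.val) := by
    ext j
    simp only [Finset.mem_filter, Finset.mem_univ, true_and]
    exact hiff j
  rw [heq, card_tail]
  have := gg_le_I' hmono hpos (d := d) k t
  omega

lemma ahat_sum (hmono : StrictMono I) (hpos : ∀ k, 0 < I k) (k : Fin m) :
    ∑ j, ahat m I d k j = d k := by
  rw [sum_eq_sum_lev _ (Nbig m d) (fun j => ahat_le_N k j)]
  calc ∑ t ∈ range (Nbig m d), lev (ahat m I d k) t
      = ∑ t ∈ range (Nbig m d), gg (Iext m I) (dext m d) k.val t :=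
        Finset.sum_congr rfl (fun t _ => lev_ahat hmono hpos k t)
    _ = d k := gg_sum_N hmono hpos k

lemma ahat_admissible (hmono : StrictMono I) (hpos : ∀ k, 0 < I k) (hI : Monotone I) :
    IsAdmissible I hI d (ahat m I d) := by
  refine ⟨fun k => ahat_mono hmono hpos k, ?_, fun k => ahat_sum hmono hpos k⟩
  intro k h j
  unfold ahat
  apply Finset.card_le_card
  intro t ht
  simp only [Finset.mem_filter, Finset.mem_range, Fin.coe_castLE] at ht ⊢
  refine ⟨ht.1, ?_⟩
  have h2 := ht.2
  have hc := gg_cross (Iext m I) (dext m d) k.val t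
  rw [Iext_at k] at hc
  have hI1 : Iext m I (k.val+1) = I ⟨k.val+1, h⟩ := Iext_at (⟨k.val+1, h⟩ : Fin m)
  rw [hI1] at hc
  have hmle : I k ≤ I ⟨k.val+1, h⟩ :=
    le_of_lt (hmono (show k < ⟨k.val+1, h⟩ from Fin.lt_def.mpr (by simp)))
  omega

lemma rowcast (N i : ℕ) (x : ℕ → ℕ) (hxi : ∀ t, x t ≤ i) :
    ((∑ t ∈ range N, x t * (i - x t) : ℕ) : ℤ)
      = (i:ℤ) * (∑ t ∈ range N, (x t:ℤ)) - ∑ t ∈ range N, (x t:ℤ) * (x t:ℤ) := by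
  rw [Nat.cast_sum]
  have h : ∀ t ∈ range N, ((x t * (i - x t) : ℕ) : ℤ) = (i:ℤ)*(x t:ℤ) - (x t:ℤ)*(x t:ℤ) := by
    intro t _
    have hx := hxi t
    rw [Nat.cast_mul, Nat.cast_sub hx]
    ring
  rw [Finset.sum_congr rfl h, Finset.sum_sub_distrib, ← Finset.mul_sum]

lemma spread_key (hmono : StrictMono I) (hpos : ∀ k, 0 < I k) (hI : Monotone I)
    {b : (k : Fin m) → Fin (I k) → ℕ} (hb : IsAdmissible I hI d b) :
    spreadVal I (ahat m I d) ≤ spreadVal I b ∧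
      (spreadVal I b ≤ spreadVal I (ahat m I d) → b = ahat m I d) := by
  classical
  have hspread : ∀ (c : (k : Fin m) → Fin (I k) → ℕ), IsAdmissible I hI d c →
      spreadVal I c = ∑ k, ∑ t ∈ range (Nbig m d), lev (c k) t * (I k - lev (c k) t) := by
    intro c hc
    unfold spreadVal
    apply Finset.sum_congr rfl
    intro k _
    apply spread_row (c k) (hc.1 k) (Nbig m d)
    intro j
    have := entry_le hc k j
    have := d_lt_Nbig (d := d) k
    omega
  have hsb := hspread b hb
  have hsa := hspread (ahat m I d) (ahat_admissible hmono hpos hI)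
  have hsa' : spreadVal I (ahat m I d)
      = ∑ k, ∑ t ∈ range (Nbig m d), gg (Iext m I) (dext m d) k.val t *
          (I k - gg (Iext m I) (dext m d) k.val t) := by
    rw [hsa]
    apply Finset.sum_congr rfl
    intro k _
    apply Finset.sum_congr rfl
    intro t _
    rw [lev_ahat hmono hpos]
  -- per-row data
  have hrow : ∀ k : Fin m,
      (∑ t ∈ range (Nbig m d), lev (b k) t * lev (b k) t
        ≤ ∑ t ∈ range (Nbig m d), gg (Iext m I) (dext m d) k.val t * gg (Iext m I) (dext m d) k.val t)
      ∧ ((∑ t ∈ range (Nbig m d), lev (b k) t * lev (b k) t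
          = ∑ t ∈ range (Nbig m d), gg (Iext m I) (dext m d) k.val t * gg (Iext m I) (dext m d) k.val t)
          → ∀ t < Nbig m d, lev (b k) t = gg (Iext m I) (dext m d) k.val t) := by
    intro k
    apply row_sq
    · exact fun t => lev_antitone (b k) (Nat.le_succ t)
    · exact fun t => gg_antitone _ _ _ (Nat.le_succ t)
    · intro M _
      rw [sum_gg]
      have := prefix_dom hb k.val k.isLt M
      simpa only [Fin.eta] using this
    · rw [lev_sum_N hb k, gg_sum_N hmono hpos k]
  -- cast identities for rows
  have hcx : ∀ k : Fin m, ((∑ t ∈ range (Nbig m d), lev (b k) t * (I k - lev (b k) t) : ℕ) : ℤ)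
      = (I k : ℤ) * (d k : ℤ) - ∑ t ∈ range (Nbig m d), (lev (b k) t : ℤ) * (lev (b k) t : ℤ) := by
    intro k
    rw [rowcast _ _ _ (fun t => lev_le (b k) t)]
    congr 2
    have := lev_sum_N hb k
    exact_mod_cast congrArg (Nat.cast : ℕ → ℤ) this
  have hcy : ∀ k : Fin m, ((∑ t ∈ range (Nbig m d), gg (Iext m I) (dext m d) k.val t *
        (I k - gg (Iext m I) (dext m d) k.val t) : ℕ) : ℤ)
      = (I k : ℤ) * (d k : ℤ) - ∑ t ∈ range (Nbig m d),
          (gg (Iext m I) (dext m d) k.val t : ℤ) * (gg (Iext m I) (dext m d) k.val t : ℤ) := by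
    intro k
    rw [rowcast _ _ _ (fun t => gg_le_I' hmono hpos k t)]
    congr 2
    have := gg_sum_N (d := d) hmono hpos k
    exact_mod_cast congrArg (Nat.cast : ℕ → ℤ) this
  have hrowle : ∀ k : Fin m,
      ∑ t ∈ range (Nbig m d), gg (Iext m I) (dext m d) k.val t * (I k - gg (Iext m I) (dext m d) k.val t)
        ≤ ∑ t ∈ range (Nbig m d), lev (b k) t * (I k - lev (b k) t) := by
    intro k
    have h1 := (hrow k).1
    have h1' : (∑ t ∈ range (Nbig m d), (lev (b k) t : ℤ) * (lev (b k) t : ℤ))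
        ≤ ∑ t ∈ range (Nbig m d), (gg (Iext m I) (dext m d) k.val t : ℤ) * (gg (Iext m I) (dext m d) k.val t : ℤ) := by
      exact_mod_cast h1
    have := hcx k
    have := hcy k
    have hfinal : ((∑ t ∈ range (Nbig m d), gg (Iext m I) (dext m d) k.val t *
          (I k - gg (Iext m I) (dext m d) k.val t) : ℕ) : ℤ)
        ≤ ((∑ t ∈ range (Nbig m d), lev (b k) t * (I k - lev (b k) t) : ℕ) : ℤ) := by
      rw [hcx k, hcy k]
      omega
    exact_mod_cast hfinal
  constructor
  · rw [hsa', hsb]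
    exact Finset.sum_le_sum (fun k _ => hrowle k)
  · intro hle2
    -- all rows equal
    rw [hsa', hsb] at hle2
    have hsumeq : ∑ k, ∑ t ∈ range (Nbig m d), gg (Iext m I) (dext m d) k.val t *
          (I k - gg (Iext m I) (dext m d) k.val t)
        = ∑ k, ∑ t ∈ range (Nbig m d), lev (b k) t * (I k - lev (b k) t) := by
      have := Finset.sum_le_sum (s := (Finset.univ : Finset (Fin m))) (fun k _ => hrowle k)
      omega
    have hroweq := (Finset.sum_eq_sum_iff_of_le (fun k _ => hrowle k)).mp hsumeq
    -- per-row levels equal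
    have hlev : ∀ k : Fin m, ∀ t < Nbig m d, lev (b k) t = gg (Iext m I) (dext m d) k.val t := by
      intro k
      apply (hrow k).2
      have h1 := hroweq k (Finset.mem_univ k)
      have hfinal : (∑ t ∈ range (Nbig m d), (lev (b k) t : ℤ) * (lev (b k) t : ℤ))
          = ∑ t ∈ range (Nbig m d), (gg (Iext m I) (dext m d) k.val t : ℤ) * (gg (Iext m I) (dext m d) k.val t : ℤ) := by
        have h2 : ((∑ t ∈ range (Nbig m d), gg (Iext m I) (dext m d) k.val t *
              (I k - gg (Iext m I) (dext m d) k.val t) : ℕ) : ℤ)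
            = ((∑ t ∈ range (Nbig m d), lev (b k) t * (I k - lev (b k) t) : ℕ) : ℤ) := by
          exact_mod_cast congrArg (Nat.cast : ℕ → ℤ) h1
        rw [hcx k, hcy k] at h2
        omega
      exact_mod_cast hfinal
    -- reconstruction
    funext k
    funext j
    have hbjN : b k j ≤ Nbig m d := by
      have := entry_le hb k j
      have := d_lt_Nbig (d := d) k
      omega
    have e1 : (range (Nbig m d)).filter (fun t => t < b k j) = range (b k j) := by
      ext t
      simp only [Finset.mem_filter, Finset.mem_range]
      omega
    have e2 : (range (Nbig m d)).filter (fun t => t < ahat m I d k j) = range (ahat m I d k j) := by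
      ext t
      simp only [Finset.mem_filter, Finset.mem_range]
      have := ahat_le_N (d := d) k j
      omega
    have e3 : (range (Nbig m d)).filter (fun t => t < b k j)
        = (range (Nbig m d)).filter (fun t => t < ahat m I d k j) := by
      apply Finset.filter_congr
      intro t ht
      simp only [Finset.mem_range] at ht
      rw [mem_lev_iff (hb.1 k) t j, hlev k t ht, ahat_lt_iff hmono hpos]
    have := congrArg Finset.card e3
    rw [e1, e2, card_range, card_range] at this
    exact this

end Main2

end BalancedAux

/-- Among all `(I, d)`-admissible sets of sequences there is exactly one balanced one,
i.e. exactly one minimizing `spreadVal`. -/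
theorem existsUnique_balanced_admissible (m n : ℕ) (I : Fin m → ℕ)
    (hmono : StrictMono I) (hpos : ∀ k, 0 < I k) (hlt : ∀ k, I k < n)
    (d : Fin m → ℕ) :
    ∃! a : (k : Fin m) → Fin (I k) → ℕ,
      IsAdmissible I hmono.monotone d a ∧
        ∀ b : (k : Fin m) → Fin (I k) → ℕ,
          IsAdmissible I hmono.monotone d b → spreadVal I a ≤ spreadVal I b := by
  classical
  refine ⟨BalancedAux.ahat m I d,
    ⟨BalancedAux.ahat_admissible hmono hpos hmono.monotone, ?_⟩, ?_⟩
  · intro b hb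
    exact (BalancedAux.spread_key hmono hpos hmono.monotone hb).1
  · rintro y ⟨hyadm, hymin⟩
    have h1 := hymin (BalancedAux.ahat m I d)
      (BalancedAux.ahat_admissible hmono hpos hmono.monotone)
    exact (BalancedAux.spread_key hmono hpos hmono.monotone hyadm).2 h1
end

section
/- Fix integers 0 < i₁ < ⋯ < i_m < n and nonnegative integers d₁, …, d_m, with the convention d₀ = 0 and i₀ = 0. Let 1 < k ≤ m be such that for all p < k one has d_k ≥ i_k · ⌈(d_p - d_{p-1})/(i_p - i_{p-1})⌉. Then the balanced (I,d)-admissible set of sequences {(a_{1,j}), …, (a_{m,j})} satisfies a_{k,j} = a_{k-1,j} for all 1 ≤ j ≤ i_{k-1}. -/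
def fprev {m : ℕ} (f : Fin m → ℕ) (p : Fin m) : ℕ :=
  if _ : p.val = 0 then 0
  else f ⟨p.val - 1, lt_of_le_of_lt (Nat.sub_le _ _) p.isLt⟩

/-! ### Totalized access -/

def Atot {m : ℕ} (I : Fin m → ℕ) (a : (k : Fin m) → Fin (I k) → ℕ) (t j : ℕ) : ℕ :=
  if h : t < m then (if h2 : j < I ⟨t, h⟩ then a ⟨t, h⟩ ⟨j, h2⟩ else 0) else 0

lemma Atot_eq {m : ℕ} (I : Fin m → ℕ) (a : (k : Fin m) → Fin (I k) → ℕ)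
    {t j : ℕ} (ht : t < m) (hj : j < I ⟨t, ht⟩) :
    Atot I a t j = a ⟨t, ht⟩ ⟨j, hj⟩ := by
  simp [Atot, ht, hj]

lemma Atot_fin {m : ℕ} (I : Fin m → ℕ) (a : (k : Fin m) → Fin (I k) → ℕ)
    (t : Fin m) (j : Fin (I t)) : Atot I a t.val j.val = a t j := by
  obtain ⟨tv, ht⟩ := t
  obtain ⟨jv, hj⟩ := j
  exact Atot_eq I a ht hj

section Basic

variable {m : ℕ} {I : Fin m → ℕ} {hI : Monotone I} {d : Fin m → ℕ}
  {a : (k : Fin m) → Fin (I k) → ℕ}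

lemma I_mono (hI : Monotone I) {s t : ℕ} (hst : s ≤ t) (ht : t < m) :
    I ⟨s, lt_of_le_of_lt hst ht⟩ ≤ I ⟨t, ht⟩ :=
  hI (by simp [Fin.le_def]; omega)

lemma A_mono (ha : IsAdmissible I hI d a) {t j1 j2 : ℕ} (ht : t < m)
    (h12 : j1 ≤ j2) (hj : j2 < I ⟨t, ht⟩) :
    Atot I a t j1 ≤ Atot I a t j2 := by
  rw [Atot_eq I a ht (lt_of_le_of_lt h12 hj), Atot_eq I a ht hj]
  exact ha.1 _ (by simpa [Fin.le_def] using h12)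

lemma A_step (ha : IsAdmissible I hI d a) {t j : ℕ} (ht : t + 1 < m)
    (hj : j < I ⟨t, Nat.lt_of_succ_lt ht⟩) :
    Atot I a (t + 1) j ≤ Atot I a t j := by
  have ht' : t < m := Nat.lt_of_succ_lt ht
  have hj2 : j < I ⟨t + 1, ht⟩ :=
    lt_of_lt_of_le hj (I_mono hI (Nat.le_succ t) ht)
  rw [Atot_eq I a ht' hj, Atot_eq I a ht hj2]
  exact ha.2.1 ⟨t, ht'⟩ ht ⟨j, hj⟩

lemma A_cross (ha : IsAdmissible I hI d a) {s t j : ℕ} (hst : s ≤ t) (ht : t < m)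
    (hj : j < I ⟨s, lt_of_le_of_lt hst ht⟩) :
    Atot I a t j ≤ Atot I a s j := by
  induction t with
  | zero =>
    have : s = 0 := by omega
    subst this; rfl
  | succ n ih =>
    rcases Nat.lt_or_ge s (n+1) with h | h
    · have hs : s ≤ n := by omega
      have hn : n < m := Nat.lt_of_succ_lt ht
      calc Atot I a (n+1) j ≤ Atot I a n j := by
            refine A_step (hI := hI) ha ht ?_
            exact lt_of_lt_of_le hj (I_mono hI hs hn)
        _ ≤ Atot I a s j := ih hs hn (by exact hj)
    · have : s = n + 1 := le_antisymm hst h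
      subst this; rfl

end Basic
def rowSpread {len : ℕ} (r : Fin len → ℕ) : ℕ :=
  ∑ p : Fin len, ∑ l ∈ Finset.univ.filter (fun l : Fin len => l < p), (r p - r l)

lemma filter_lt_eq_Iio {len : ℕ} (p : Fin len) :
    Finset.univ.filter (fun l : Fin len => l < p) = Finset.Iio p := by
  ext l; simp

lemma rowSpread_cast {len : ℕ} {r : Fin len → ℕ} (hr : Monotone r) :
    (rowSpread r : ℤ) = ∑ p : Fin len, ∑ l ∈ Finset.Iio p, ((r p : ℤ) - (r l : ℤ)) := by
  unfold rowSpread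
  push_cast
  refine Finset.sum_congr rfl fun p _ => ?_
  rw [filter_lt_eq_Iio]
  refine Finset.sum_congr rfl fun l hl => ?_
  rw [Finset.mem_Iio] at hl
  rw [Nat.cast_sub (hr hl.le)]

lemma rowSpread_lt {len : ℕ} {r s : Fin len → ℕ} (hr : Monotone r) (hs : Monotone s)
    {jF qF : Fin len} (hlt : jF < qF)
    (hpt : ∀ j : Fin len, (s j : ℤ) =
      (r j : ℤ) + (if j = jF then 1 else 0) - (if j = qF then 1 else 0)) :
    rowSpread s < rowSpread r := by
  have key : (rowSpread s : ℤ) < (rowSpread r : ℤ) := by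
    rw [rowSpread_cast hr, rowSpread_cast hs]
    have expand : ∀ p : Fin len, ∀ l ∈ Finset.Iio p,
        (s p : ℤ) - s l = ((r p : ℤ) - r l) +
          (((if p = jF then (1:ℤ) else 0) - (if p = qF then 1 else 0)) -
           ((if l = jF then (1:ℤ) else 0) - (if l = qF then 1 else 0))) := by
      intro p l _
      rw [hpt p, hpt l]; ring
    have hsum : ∑ p : Fin len, ∑ l ∈ Finset.Iio p, ((s p : ℤ) - s l)
        = (∑ p : Fin len, ∑ l ∈ Finset.Iio p, ((r p : ℤ) - r l))
          + ∑ p : Fin len, ∑ l ∈ Finset.Iio p,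
            (((if p = jF then (1:ℤ) else 0) - (if p = qF then 1 else 0)) -
             ((if l = jF then (1:ℤ) else 0) - (if l = qF then 1 else 0))) := by
      rw [← Finset.sum_add_distrib]
      refine Finset.sum_congr rfl fun p _ => ?_
      rw [← Finset.sum_add_distrib]
      exact Finset.sum_congr rfl (expand p)
    have hdelta : (∑ p : Fin len, ∑ l ∈ Finset.Iio p,
        (((if p = jF then (1:ℤ) else 0) - (if p = qF then 1 else 0)) -
         ((if l = jF then (1:ℤ) else 0) - (if l = qF then 1 else 0)))) < 0 := by
      have h1 : ∀ p : Fin len, ∑ l ∈ Finset.Iio p,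
          (((if p = jF then (1:ℤ) else 0) - (if p = qF then 1 else 0)) -
           ((if l = jF then (1:ℤ) else 0) - (if l = qF then 1 else 0)))
          = (Finset.Iio p).card • ((if p = jF then (1:ℤ) else 0) - (if p = qF then 1 else 0))
            - ((if jF ∈ Finset.Iio p then (1:ℤ) else 0) - (if qF ∈ Finset.Iio p then 1 else 0)) := by
        intro p
        rw [Finset.sum_sub_distrib, Finset.sum_const, Finset.sum_sub_distrib]
        congr 1
        congr 1
        · exact Finset.sum_ite_eq' _ jF (fun _ => (1:ℤ))
        · exact Finset.sum_ite_eq' _ qF (fun _ => (1:ℤ))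
      calc (∑ p : Fin len, ∑ l ∈ Finset.Iio p,
          (((if p = jF then (1:ℤ) else 0) - (if p = qF then 1 else 0)) -
           ((if l = jF then (1:ℤ) else 0) - (if l = qF then 1 else 0))))
          = ∑ p : Fin len, ((Finset.Iio p).card • ((if p = jF then (1:ℤ) else 0) - (if p = qF then 1 else 0))
            - ((if jF ∈ Finset.Iio p then (1:ℤ) else 0) - (if qF ∈ Finset.Iio p then 1 else 0))) :=
            Finset.sum_congr rfl fun p _ => h1 p
        _ = (∑ p : Fin len, (Finset.Iio p).card • ((if p = jF then (1:ℤ) else 0) - (if p = qF then 1 else 0)))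
            - ∑ p : Fin len, ((if jF ∈ Finset.Iio p then (1:ℤ) else 0) - (if qF ∈ Finset.Iio p then 1 else 0)) :=
            Finset.sum_sub_distrib _ _
        _ < 0 := by
            have e1 : (∑ p : Fin len, (Finset.Iio p).card • ((if p = jF then (1:ℤ) else 0) - (if p = qF then 1 else 0)))
                = (jF.val : ℤ) - (qF.val : ℤ) := by
              have : ∀ p : Fin len, (Finset.Iio p).card • ((if p = jF then (1:ℤ) else 0) - (if p = qF then 1 else 0))
                  = (if p = jF then ((Finset.Iio p).card : ℤ) else 0) - (if p = qF then ((Finset.Iio p).card : ℤ) else 0) := by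
                intro p
                have hne : jF ≠ qF := ne_of_lt hlt
                by_cases h1 : p = jF
                · subst h1; simp [hne]
                · by_cases h2 : p = qF
                  · subst h2; simp [h1, Ne.symm hne]
                  · simp [h1, h2]
              rw [Finset.sum_congr rfl fun p _ => this p, Finset.sum_sub_distrib,
                Finset.sum_ite_eq' _ jF (fun p => ((Finset.Iio p).card : ℤ)),
                Finset.sum_ite_eq' _ qF (fun p => ((Finset.Iio p).card : ℤ))]
              simp [Fin.card_Iio]
            have cardsum : ∀ x : Fin len, (∑ p : Fin len, (if x ∈ Finset.Iio p then (1:ℤ) else 0))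
                = ((Finset.Ioi x).card : ℤ) := by
              intro x
              have : ∀ p : Fin len, (if x ∈ Finset.Iio p then (1:ℤ) else 0)
                  = (if x < p then (1:ℤ) else 0) := by intro p; simp [Finset.mem_Iio]
              rw [Finset.sum_congr rfl fun p _ => this p, Finset.sum_boole]
              have : Finset.univ.filter (fun p : Fin len => x < p) = Finset.Ioi x := by
                ext p; simp
              rw [this]
            have e2 : (∑ p : Fin len, ((if jF ∈ Finset.Iio p then (1:ℤ) else 0) - (if qF ∈ Finset.Iio p then 1 else 0)))
                = ((Finset.Ioi jF).card : ℤ) - ((Finset.Ioi qF).card : ℤ) := by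
              rw [Finset.sum_sub_distrib, cardsum, cardsum]
            rw [e1, e2, Fin.card_Ioi, Fin.card_Ioi]
            have h1 : jF.val < qF.val := hlt
            have h2 : qF.val < len := qF.isLt
            push_cast [Nat.cast_sub]
            omega
    rw [hsum]
    linarith [hdelta]
  exact_mod_cast key

/-! ### helpers -/

lemma mono_of_succ {len : ℕ} (f : Fin len → ℕ)
    (h : ∀ (j : ℕ) (h1 : j + 1 < len), f ⟨j, Nat.lt_of_succ_lt h1⟩ ≤ f ⟨j + 1, h1⟩) :
    Monotone f := by
  have key : ∀ (kk : ℕ) (hk : kk < len) (i : Fin len), i.val ≤ kk → f i ≤ f ⟨kk, hk⟩ := by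
    intro kk
    induction kk with
    | zero =>
      intro hk i hi
      have : i = ⟨0, hk⟩ := Fin.ext (show i.val = 0 by omega)
      rw [this]
    | succ nn ih =>
      intro hk i hi
      rcases Nat.lt_or_ge i.val (nn+1) with h1 | h1
      · exact le_trans (ih (Nat.lt_of_succ_lt hk) i (by omega)) (h nn hk)
      · have : i = ⟨nn+1, hk⟩ := Fin.ext (show i.val = nn+1 by omega)
        rw [this]
  intro i j hij
  have := key j.val j.isLt i hij
  simpa using this

/-! ### the modification -/

def Jf {m : ℕ} (I : Fin m → ℕ) (a : (k : Fin m) → Fin (I k) → ℕ)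
    (t0v jv qv : ℕ) : ℕ → ℕ
  | 0 => jv
  | s+1 => max (Jf I a t0v jv qv s)
      (Nat.findGreatest (fun jj => Atot I a (t0v+s+1) jj < Atot I a (t0v+s) jj) (qv-1))

def bmod {m : ℕ} (I : Fin m → ℕ) (a : (k : Fin m) → Fin (I k) → ℕ)
    (t0v qv tstar : ℕ) (J : ℕ → ℕ) : (k : Fin m) → (Fin (I k) → ℕ) :=
  fun t j =>
    if t0v ≤ t.val ∧ t.val ≤ tstar then
      (if j.val = qv then a t j - 1
       else if j.val = J (t.val - t0v) then a t j + 1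
       else a t j)
    else a t j

lemma exchange {m : ℕ} {I : Fin m → ℕ} (hmono : StrictMono I) {d : Fin m → ℕ}
    {a : (k : Fin m) → Fin (I k) → ℕ} (ha : IsAdmissible I hmono.monotone d a)
    (t0 : Fin m) (j' q : Fin (I t0)) (hjq : j'.val < q.val)
    (hgap : a t0 j' + 2 ≤ a t0 q)
    (hblock : ∀ jj : Fin (I t0), j'.val < jj.val → a t0 j' < a t0 jj)
    (hqf : ∀ jj : Fin (I t0), jj.val < q.val → a t0 jj < a t0 q)
    (hupper : ∀ (ht : 0 < t0.val)
      (hj : j'.val < I ⟨t0.val - 1, lt_of_le_of_lt (Nat.sub_le _ _) t0.isLt⟩),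
      a t0 j' < a ⟨t0.val - 1, lt_of_le_of_lt (Nat.sub_le _ _) t0.isLt⟩ ⟨j'.val, hj⟩) :

    ∃ b, IsAdmissible I hmono.monotone d b ∧ spreadVal I b < spreadVal I a := by
  classical
  have ht0m : t0.val < m := t0.isLt
  have hqI : q.val < I t0 := q.isLt
  have hjI : j'.val < I t0 := j'.isLt
  set M := Atot I a t0.val q.val with hM
  have hMe : M = a t0 q := Atot_fin I a t0 q
  have hgap' : a t0 j' + 2 ≤ M := by rw [hMe]; exact hgap
  have hMge2 : 2 ≤ M := by omega
  have hPt0 : t0.val < m ∧ M ≤ Atot I a t0.val q.val := ⟨ht0m, le_refl M⟩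
  have ht0m1 : t0.val ≤ m - 1 := by omega
  set tstar := Nat.findGreatest (fun t => t < m ∧ M ≤ Atot I a t q.val) (m-1) with htsdef
  have htstar0 : t0.val ≤ tstar := Nat.le_findGreatest ht0m1 hPt0
  have htstarP : tstar < m ∧ M ≤ Atot I a tstar q.val :=
    Nat.findGreatest_spec (P := fun t => t < m ∧ M ≤ Atot I a t q.val) ht0m1 hPt0
  have hqlt : ∀ (t : ℕ) (h2 : t < m), t0.val ≤ t → q.val < I ⟨t, h2⟩ := by
    intro t h2 h1
    exact lt_of_lt_of_le hqI (I_mono hmono.monotone h1 h2)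
  have hchain : ∀ t, t0.val ≤ t → t ≤ tstar → Atot I a t q.val = M := by
    intro t h1 h2
    have h3 : t < m := lt_of_le_of_lt h2 htstarP.1
    apply le_antisymm
    · exact A_cross ha h1 h3 hqI
    · calc M ≤ Atot I a tstar q.val := htstarP.2
        _ ≤ Atot I a t q.val := A_cross ha h2 htstarP.1 (hqlt t h3 h1)
  have hafter : ∀ t, tstar < t → t < m → Atot I a t q.val < M := by
    intro t h1 h2
    have h3 := Nat.findGreatest_is_greatest (P := fun t => t < m ∧ M ≤ Atot I a t q.val)
      (by omega : Nat.findGreatest (fun t => t < m ∧ M ≤ Atot I a t q.val) (m-1) < t)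
      (by omega : t ≤ m - 1)
    by_contra hcon
    exact h3 ⟨h2, by omega⟩
  have hsmall : ∀ (t jj : ℕ), t0.val ≤ t → t < m → jj < q.val → Atot I a t jj + 1 ≤ M := by
    intro t jj h1 h2 h3
    have e1 : Atot I a t jj ≤ Atot I a t0.val jj :=
      A_cross ha h1 h2 (lt_trans h3 hqI)
    have e2 : a t0 ⟨jj, lt_trans h3 hqI⟩ < a t0 q := hqf ⟨jj, lt_trans h3 hqI⟩ h3
    have e3 : Atot I a t0.val jj = a t0 ⟨jj, lt_trans h3 hqI⟩ := Atot_eq I a ht0m (lt_trans h3 hqI)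
    omega
  set J := Jf I a t0.val j'.val q.val with hJ
  have hJ0 : J 0 = j'.val := rfl
  have hJs : ∀ s, J (s+1) = max (J s)
      (Nat.findGreatest (fun jj => Atot I a (t0.val+s+1) jj < Atot I a (t0.val+s) jj) (q.val-1)) :=
    fun s => rfl
  set b := bmod I a t0.val q.val tstar J with hb
  have hbfin : ∀ (t : Fin m) (j : Fin (I t)), b t j =
      if t0.val ≤ t.val ∧ t.val ≤ tstar then
        (if j.val = q.val then a t j - 1
         else if j.val = J (t.val - t0.val) then a t j + 1
         else a t j)
      else a t j := fun _ _ => rfl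
  have hBval : ∀ (t j : ℕ) (ht : t < m) (hj : j < I ⟨t, ht⟩),
      Atot I b t j = if t0.val ≤ t ∧ t ≤ tstar then
        (if j = q.val then Atot I a t j - 1
         else if j = J (t - t0.val) then Atot I a t j + 1
         else Atot I a t j)
      else Atot I a t j := by
    intro t j ht hj
    rw [Atot_eq I b ht hj, Atot_eq I a ht hj, hbfin]
  -- the key invariant
  have INV : ∀ s, t0.val + s ≤ tstar →
      (j'.val ≤ J s ∧ J s < q.val) ∧
      (Atot I a (t0.val+s) (J s) + 2 ≤ M) ∧
      (s ≠ 0 → Atot I a (t0.val+s) (J s) < Atot I b (t0.val+s-1) (J s)) ∧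
      (J s + 1 < q.val → Atot I a (t0.val+s) (J s) < Atot I a (t0.val+s) (J s + 1)) := by
    intro s
    induction s with
    | zero =>
      intro _
      simp only [Nat.add_zero, hJ0]
      refine ⟨⟨le_refl _, hjq⟩, ?_, fun hs => absurd rfl hs, ?_⟩
      · rw [Atot_eq I a ht0m hjI, hMe]
        exact hgap
      · intro h4
        have h5 : j'.val + 1 < I t0 := lt_trans h4 hqI
        rw [Atot_eq I a ht0m hjI, Atot_eq I a ht0m h5]
        exact hblock ⟨j'.val+1, h5⟩ (by simp)
    | succ ss ih =>
      intro hle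
      have hle' : t0.val + ss ≤ tstar := by omega
      obtain ⟨⟨ih1a, ih1b⟩, ih2, ih3, ih4⟩ := ih hle'
      have htm : t0.val + ss + 1 < m := by omega
      have htm' : t0.val + ss < m := by omega
      set G := Nat.findGreatest
        (fun jj => Atot I a (t0.val+ss+1) jj < Atot I a (t0.val+ss) jj) (q.val-1) with hG
      have hJval : J (ss+1) = max (J ss) G := hJs ss
      have hGle : G ≤ q.val - 1 := Nat.findGreatest_le _
      have hqpos : 0 < q.val := by omega
      have hprevchain : t0.val ≤ t0.val + ss ∧ t0.val + ss ≤ tstar := ⟨by omega, hle'⟩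
      have hJssI : J ss < I ⟨t0.val + ss, htm'⟩ := lt_trans ih1b (hqlt _ htm' (by omega))
      have hadd : t0.val + (ss + 1) = t0.val + ss + 1 := by omega
      rw [hadd]
      rcases Nat.lt_or_ge (J ss) G with hc | hc
      · -- new index G
        have hJe : J (ss+1) = G := by rw [hJval]; omega
        have hG0 : G ≠ 0 := by omega
        have hGq : G < q.val := by omega
        have hGI' : G < I ⟨t0.val + ss, htm'⟩ := lt_trans hGq (hqlt _ htm' (by omega))
        have hGP : Atot I a (t0.val+ss+1) G < Atot I a (t0.val+ss) G :=
          Nat.findGreatest_of_ne_zero (P := fun jj =>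
            Atot I a (t0.val+ss+1) jj < Atot I a (t0.val+ss) jj) hG.symm hG0
        have hBG : Atot I b (t0.val+ss) G = Atot I a (t0.val+ss) G := by
          rw [hBval _ _ htm' hGI']
          have hne1 : ¬ (G = q.val) := by omega
          have hne2 : ¬ (G = J ss) := by omega
          simp [hprevchain, hne1, hne2]
        have hup : Atot I a (t0.val+ss) G + 1 ≤ M := hsmall _ _ (by omega) htm' hGq
        rw [hJe]
        refine ⟨⟨by omega, hGq⟩, by omega, ?_, ?_⟩
        · intro _
          have he : t0.val + ss + 1 - 1 = t0.val + ss := by omega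
          rw [he, hBG]
          exact hGP
        · intro h4
          have hGq1 : G + 1 ≤ q.val - 1 := by omega
          have h5 := Nat.findGreatest_is_greatest (P := fun jj =>
            Atot I a (t0.val+ss+1) jj < Atot I a (t0.val+ss) jj) (by omega) hGq1
          have hG1I : G + 1 < I ⟨t0.val + ss, htm'⟩ := lt_trans h4 (hqlt _ htm' (by omega))
          have heq : Atot I a (t0.val+ss+1) (G+1) = Atot I a (t0.val+ss) (G+1) :=
            le_antisymm (A_step ha htm hG1I) (not_lt.mp h5)
          have hmn : Atot I a (t0.val+ss) G ≤ Atot I a (t0.val+ss) (G+1) :=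
            A_mono ha htm' (by omega) hG1I
          omega
      · -- keep index J ss
        have hJe : J (ss+1) = J ss := by rw [hJval]; omega
        have hstep1 : Atot I a (t0.val+ss+1) (J ss) ≤ Atot I a (t0.val+ss) (J ss) :=
          A_step ha htm hJssI
        have hBJ : Atot I b (t0.val+ss) (J ss) = Atot I a (t0.val+ss) (J ss) + 1 := by
          rw [hBval _ _ htm' hJssI]
          have hne1 : ¬ (J ss = q.val) := by omega
          have he2 : t0.val + ss - t0.val = ss := by omega
          simp [hprevchain, hne1, he2]
        rw [hJe]
        refine ⟨⟨ih1a, ih1b⟩, by omega, ?_, ?_⟩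
        · intro _
          have he : t0.val + ss + 1 - 1 = t0.val + ss := by omega
          rw [he, hBJ]
          omega
        · intro h4
          have hJq1 : J ss + 1 ≤ q.val - 1 := by omega
          have h5 := Nat.findGreatest_is_greatest (P := fun jj =>
            Atot I a (t0.val+ss+1) jj < Atot I a (t0.val+ss) jj) (by omega) hJq1
          have hJ1I : J ss + 1 < I ⟨t0.val + ss, htm'⟩ := lt_trans h4 (hqlt _ htm' (by omega))
          have heq : Atot I a (t0.val+ss+1) (J ss + 1) = Atot I a (t0.val+ss) (J ss + 1) :=
            le_antisymm (A_step ha htm hJ1I) (not_lt.mp h5)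
          have := ih4 h4
          omega
  
  -- row monotonicity of b
  have hbmono : ∀ t : Fin m, Monotone (b t) := by
    intro t
    by_cases hch : t0.val ≤ t.val ∧ t.val ≤ tstar
    · have htt : t.val < m := t.isLt
      set s := t.val - t0.val with hsdef
      have hts : t.val = t0.val + s := by omega
      have hsle : t0.val + s ≤ tstar := by omega
      obtain ⟨⟨i1a, i1b⟩, i2, i3, i4⟩ := INV s hsle
      rw [← hts] at i2 i4
      have htqv : Atot I a t.val q.val = M := hchain t.val hch.1 hch.2
      have hBx : ∀ (x : ℕ) (hx : x < I ⟨t.val, htt⟩), Atot I b t.val x =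
          if x = q.val then Atot I a t.val x - 1
          else if x = J s then Atot I a t.val x + 1
          else Atot I a t.val x := by
        intro x hx
        rw [hBval t.val x htt hx, if_pos hch, ← hsdef]
      have claim : ∀ (jj : ℕ), jj + 1 < I ⟨t.val, htt⟩ →
          Atot I b t.val jj ≤ Atot I b t.val (jj+1) := by
        intro jj h1
        have hj0 : jj < I ⟨t.val, htt⟩ := Nat.lt_of_succ_lt h1
        have hmn : Atot I a t.val jj ≤ Atot I a t.val (jj+1) :=
          A_mono ha htt (Nat.le_succ jj) h1
        rw [hBx jj hj0, hBx (jj+1) h1]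
        by_cases c1 : jj = q.val
        · have c3 : ¬ (jj + 1 = q.val) := by omega
          have c4 : ¬ (jj + 1 = J s) := by omega
          rw [if_pos c1, if_neg c3, if_neg c4]
          omega
        · by_cases c2 : jj = J s
          · have c4 : ¬ (jj + 1 = J s) := by omega
            by_cases c3 : jj + 1 = q.val
            · rw [if_neg c1, if_pos c2, if_pos c3]
              have e5 : Atot I a t.val (jj+1) = M := by rw [c3]; exact htqv
              have e6 : Atot I a t.val jj + 2 ≤ M := by rw [c2]; exact i2
              omega
            · rw [if_neg c1, if_pos c2, if_neg c3, if_neg c4]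
              have e7 : J s + 1 < q.val := by omega
              have e8 := i4 e7
              rw [c2]
              omega
          · by_cases c3 : jj + 1 = q.val
            · rw [if_neg c1, if_neg c2, if_pos c3]
              have e8 : Atot I a t.val jj + 1 ≤ M := hsmall t.val jj hch.1 htt (by omega)
              have e5 : Atot I a t.val (jj+1) = M := by rw [c3]; exact htqv
              omega
            · by_cases c4 : jj + 1 = J s
              · rw [if_neg c1, if_neg c2, if_neg c3, if_pos c4]
                omega
              · rw [if_neg c1, if_neg c2, if_neg c3, if_neg c4]
                exact hmn
      apply mono_of_succ
      intro jj h1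
      have h2 := claim jj h1
      rw [Atot_eq I b htt (show jj < I ⟨t.val, htt⟩ from Nat.lt_of_succ_lt h1),
          Atot_eq I b htt (show jj + 1 < I ⟨t.val, htt⟩ from h1)] at h2
      exact h2
    · have hbt : ∀ j, b t j = a t j := by
        intro j; rw [hbfin t j, if_neg hch]
      intro x y hxy
      rw [hbt, hbt]
      exact ha.1 t hxy
  -- step inequalities for b
  have hBstepN : ∀ (tt jj : ℕ) (h : tt + 1 < m), jj < I ⟨tt, Nat.lt_of_succ_lt h⟩ →
      Atot I b (tt+1) jj ≤ Atot I b tt jj := by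
    intro tt jj h hj
    have htt : tt < m := Nat.lt_of_succ_lt h
    have hj1 : jj < I ⟨tt+1, h⟩ := lt_of_lt_of_le hj (I_mono hmono.monotone (Nat.le_succ tt) h)
    have hstp : Atot I a (tt+1) jj ≤ Atot I a tt jj := A_step ha h hj
    by_cases hch1 : t0.val ≤ tt + 1 ∧ tt + 1 ≤ tstar
    · by_cases hch0 : t0.val ≤ tt ∧ tt ≤ tstar
      · set s1 := tt + 1 - t0.val with hs1
        set s0 := tt - t0.val with hs0
        have hs1e : t0.val + s1 = tt + 1 := by omega
        obtain ⟨⟨k1a, k1b⟩, k2, k3, k4⟩ := INV s1 (by omega)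
        rw [hs1e] at k2 k3
        have he1 : tt + 1 - 1 = tt := by omega
        rw [he1] at k3
        have hq0 : Atot I a tt q.val = M := hchain tt hch0.1 hch0.2
        have hq1 : Atot I a (tt+1) q.val = M := hchain (tt+1) hch1.1 hch1.2
        rw [hBval (tt+1) jj h hj1, if_pos hch1]
        by_cases e1 : jj = q.val
        · rw [if_pos e1, hBval tt jj htt hj, if_pos hch0, if_pos e1]
          omega
        · rw [if_neg e1, ← hs1]
          by_cases e2 : jj = J s1
          · rw [if_pos e2]
            have e9 : Atot I a (tt+1) (J s1) < Atot I b tt (J s1) := k3 (by omega)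
            rw [e2]
            omega
          · rw [if_neg e2, hBval tt jj htt hj, if_pos hch0, ← hs0]
            by_cases e4 : jj = J s0
            · rw [if_neg e1, if_pos e4]; omega
            · rw [if_neg e1, if_neg e4]; exact hstp
      · -- tt+1 = t0
        have htteq : tt + 1 = t0.val := by omega
        have hBtt : Atot I b tt jj = Atot I a tt jj := by
          rw [hBval tt jj htt hj, if_neg hch0]
        rw [hBtt, hBval (tt+1) jj h hj1, if_pos hch1]
        by_cases e1 : jj = q.val
        · rw [if_pos e1]
          omega
        · rw [if_neg e1]
          have he : tt + 1 - t0.val = 0 := by omega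
          rw [he, hJ0]
          by_cases e2 : jj = j'.val
          · rw [if_pos e2]
            have hpos : 0 < t0.val := by omega
            have hfe : (⟨tt, htt⟩ : Fin m)
                = ⟨t0.val - 1, lt_of_le_of_lt (Nat.sub_le _ _) t0.isLt⟩ :=
              Fin.ext (show tt = t0.val - 1 by omega)
            rw [hfe] at hj
            rw [e2] at hj
            have hup := hupper hpos hj
            have w1 : Atot I a t0.val j'.val = a t0 j' := Atot_fin I a t0 j'
            have w2 : Atot I a (t0.val - 1) j'.val
                = a ⟨t0.val - 1, lt_of_le_of_lt (Nat.sub_le _ _) t0.isLt⟩ ⟨j'.val, hj⟩ :=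
              Atot_eq I a _ hj
            have ht2 : tt = t0.val - 1 := by omega
            rw [e2, htteq, ht2, w1, w2]
            omega
          · rw [if_neg e2]; exact hstp
    · by_cases hch0 : t0.val ≤ tt ∧ tt ≤ tstar
      · have hBt1 : Atot I b (tt+1) jj = Atot I a (tt+1) jj := by
          rw [hBval (tt+1) jj h hj1, if_neg hch1]
        rw [hBt1, hBval tt jj htt hj, if_pos hch0]
        by_cases e1 : jj = q.val
        · rw [if_pos e1]
          have haf : Atot I a (tt+1) q.val < M := hafter (tt+1) (by omega) h
          have hq0 : Atot I a tt q.val = M := hchain tt hch0.1 hch0.2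
          rw [e1]
          omega
        · rw [if_neg e1]
          by_cases e2 : jj = J (tt - t0.val)
          · rw [if_pos e2]; omega
          · rw [if_neg e2]; exact hstp
      · have hA1 : Atot I b (tt+1) jj = Atot I a (tt+1) jj := by
          rw [hBval (tt+1) jj h hj1, if_neg hch1]
        have hA0 : Atot I b tt jj = Atot I a tt jj := by
          rw [hBval tt jj htt hj, if_neg hch0]
        rw [hA1, hA0]; exact hstp
  have hbstep : ∀ (k : Fin m) (h : k.val + 1 < m) (j : Fin (I k)),
      b ⟨k.val + 1, h⟩
        (Fin.castLE (hmono.monotone (show k ≤ (⟨k.val + 1, h⟩ : Fin m) from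
          Fin.le_def.mpr (Nat.le_succ k.val))) j) ≤ b k j := by
    intro k h j
    have h2 := hBstepN k.val j.val h (show j.val < I ⟨k.val, Nat.lt_of_succ_lt h⟩ from j.isLt)
    rw [Atot_eq I b h (show j.val < I ⟨k.val+1, h⟩ from
          lt_of_lt_of_le j.isLt (I_mono hmono.monotone (Nat.le_succ k.val) h)),
        Atot_eq I b (Nat.lt_of_succ_lt h) (show j.val < I ⟨k.val, Nat.lt_of_succ_lt h⟩ from j.isLt)] at h2
    exact h2
  -- pointwise integer formula on chain rows
  have hptw : ∀ (t : Fin m), t0.val ≤ t.val → t.val ≤ tstar →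
      ∀ (jF qF : Fin (I t)), jF.val = J (t.val - t0.val) → qF.val = q.val →
      ∀ j : Fin (I t), (b t j : ℤ) = (a t j : ℤ)
        + (if j = jF then 1 else 0) - (if j = qF then 1 else 0) := by
    intro t hch1 hch2 jF qF hjF hqF j
    have hJq : J (t.val - t0.val) < q.val := (INV (t.val - t0.val) (by omega)).1.2
    have hne : jF ≠ qF := by
      intro hcon; rw [hcon] at hjF; omega
    have haqv : a t qF = M := by
      have hcv := hchain t.val hch1 hch2
      have := Atot_fin I a t qF
      rw [hqF] at this
      omega
    rw [hbfin t j, if_pos ⟨hch1, hch2⟩]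
    by_cases h1 : j = qF
    · subst h1
      rw [if_pos hqF, haqv, if_neg (Ne.symm hne), if_pos rfl]
      omega
    · by_cases h2 : j = jF
      · subst h2
        have c1 : ¬ (j.val = q.val) := by omega
        rw [if_neg c1, if_pos hjF, if_pos rfl, if_neg hne]
        push_cast
        ring
      · have c1 : ¬ (j.val = q.val) := fun hcon => h1 (Fin.ext (by rw [hcon, ← hqF]))
        have c2 : ¬ (j.val = J (t.val - t0.val)) := fun hcon => h2 (Fin.ext (by rw [hcon, ← hjF]))
        rw [if_neg c1, if_neg c2, if_neg h2, if_neg h1]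
        push_cast
        ring
  -- sums
  have hbsum : ∀ t : Fin m, ∑ j, b t j = d t := by
    intro t
    by_cases hch : t0.val ≤ t.val ∧ t.val ≤ tstar
    · have hJq : J (t.val - t0.val) < q.val := (INV (t.val - t0.val) (by omega)).1.2
      have hqIt : q.val < I t :=
        lt_of_lt_of_le hqI (hmono.monotone (Fin.le_def.mpr hch.1))
      have hpt := hptw t hch.1 hch.2 ⟨J (t.val - t0.val), lt_trans hJq hqIt⟩ ⟨q.val, hqIt⟩ rfl rfl
      have hcast : ((∑ j, b t j : ℕ) : ℤ) = ((∑ j, a t j : ℕ) : ℤ) := by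
        push_cast
        rw [Finset.sum_congr rfl (fun j _ => hpt j)]
        rw [Finset.sum_sub_distrib, Finset.sum_add_distrib]
        rw [Finset.sum_ite_eq' Finset.univ
              (⟨J (t.val - t0.val), lt_trans hJq hqIt⟩ : Fin (I t)) (fun _ => (1:ℤ)),
            Finset.sum_ite_eq' Finset.univ (⟨q.val, hqIt⟩ : Fin (I t)) (fun _ => (1:ℤ))]
        simp
      have hnat : (∑ j, b t j) = (∑ j, a t j) := Nat.cast_inj.mp hcast
      rw [hnat]
      exact ha.2.2 t
    · have hbt : ∀ j, b t j = a t j := fun j => by rw [hbfin t j, if_neg hch]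
      rw [Finset.sum_congr rfl (fun j _ => hbt j)]
      exact ha.2.2 t
  refine ⟨b, ⟨hbmono, hbstep, hbsum⟩, ?_⟩
  have hsv : ∀ (c : (k : Fin m) → Fin (I k) → ℕ),
      spreadVal I c = ∑ t : Fin m, rowSpread (c t) := fun c => rfl
  rw [hsv, hsv]
  have hrow : ∀ (t : Fin m), t0.val ≤ t.val → t.val ≤ tstar →
      rowSpread (b t) < rowSpread (a t) := by
    intro t h1 h2
    have hJq : J (t.val - t0.val) < q.val := (INV (t.val - t0.val) (by omega)).1.2
    have hqIt : q.val < I t :=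
      lt_of_lt_of_le hqI (hmono.monotone (Fin.le_def.mpr h1))
    exact rowSpread_lt (ha.1 t) (hbmono t)
      (jF := ⟨J (t.val - t0.val), lt_trans hJq hqIt⟩) (qF := ⟨q.val, hqIt⟩)
      (Fin.mk_lt_mk.mpr hJq) (hptw t h1 h2 _ _ rfl rfl)
  apply Finset.sum_lt_sum
  · intro t _
    by_cases hch : t0.val ≤ t.val ∧ t.val ≤ tstar
    · exact (hrow t hch.1 hch.2).le
    · have hbt : ∀ j, b t j = a t j := fun j => by rw [hbfin t j, if_neg hch]
      exact le_of_eq (congrArg rowSpread (funext hbt))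
  · exact ⟨t0, Finset.mem_univ t0, hrow t0 (le_refl _) htstar0⟩

/-! ### Sum of a row in range form -/

lemma A_sum_range {m : ℕ} {I : Fin m → ℕ} {hI : Monotone I} {d : Fin m → ℕ}
    {a : (k : Fin m) → Fin (I k) → ℕ} (ha : IsAdmissible I hI d a)
    {t : ℕ} (ht : t < m) :
    ∑ jj ∈ Finset.range (I ⟨t, ht⟩), Atot I a t jj = d ⟨t, ht⟩ := by
  rw [← Fin.sum_univ_eq_sum_range (fun jj => Atot I a t jj) (I ⟨t, ht⟩)]
  rw [Finset.sum_congr rfl (fun j _ => Atot_eq I a ht j.isLt)]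
  have := ha.2.2 ⟨t, ht⟩
  convert this using 2

/-! ### ceiling -/

def ceilZ {m : ℕ} (I : Fin m → ℕ) (d : Fin m → ℕ) (p : Fin m) : ℤ :=
  ⌈((d p : ℚ) - (fprev d p : ℚ)) / ((I p : ℚ) - (fprev I p : ℚ))⌉

lemma ceil_bound {m : ℕ} (I : Fin m → ℕ) (d : Fin m → ℕ) (p : Fin m)
    (hi : fprev I p < I p) (z : ℤ) (hz : ceilZ I d p ≤ z) :
    (d p : ℤ) - (fprev d p : ℤ) ≤ z * ((I p : ℤ) - (fprev I p : ℤ)) := by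
  have hpos : (0:ℚ) < (I p : ℚ) - (fprev I p : ℚ) := by
    have : (fprev I p : ℚ) < (I p : ℚ) := by exact_mod_cast hi
    linarith
  have h1 : ((d p : ℚ) - (fprev d p : ℚ)) / ((I p : ℚ) - (fprev I p : ℚ)) ≤ (z : ℚ) :=
    le_trans (Int.le_ceil _)
      (show ((ceilZ I d p : ℤ) : ℚ) ≤ ((z : ℤ) : ℚ) from Int.cast_le.mpr hz)
  rw [div_le_iff₀ hpos] at h1
  exact_mod_cast h1

lemma ceil_nonneg_zero {m : ℕ} (I : Fin m → ℕ) (d : Fin m → ℕ) (p : Fin m)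
    (hp0 : p.val = 0) (hpos : 0 < I p) : 0 ≤ ceilZ I d p := by
  have h1 : fprev I p = 0 := by unfold fprev; rw [dif_pos hp0]
  have h2 : fprev d p = 0 := by unfold fprev; rw [dif_pos hp0]
  unfold ceilZ
  rw [h1, h2]
  simp only [Nat.cast_zero, sub_zero]
  apply Int.ceil_nonneg
  apply div_nonneg
  · positivity
  · positivity

/-! ### block exchange: a balanced set has no "low block" below a high value -/

lemma exchange_block {m : ℕ} {I : Fin m → ℕ} (hmono : StrictMono I) {d : Fin m → ℕ}
    {a : (k : Fin m) → Fin (I k) → ℕ} (ha : IsAdmissible I hmono.monotone d a)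
    (hbal : ∀ b, IsAdmissible I hmono.monotone d b → spreadVal I a ≤ spreadVal I b)
    (pv : ℕ) (hp : pv < m) (jw : ℕ) (hjw : jw < I ⟨pv, hp⟩)
    (hgap2 : Atot I a pv jw + 2 ≤ Atot I a pv (I ⟨pv, hp⟩ - 1))
    (hup : ∀ x : ℕ, jw ≤ x → Atot I a pv x = Atot I a pv jw → 0 < pv →
        x < I ⟨pv - 1, lt_of_le_of_lt (Nat.sub_le _ _) hp⟩ →
        Atot I a pv jw < Atot I a (pv - 1) x) : False := by
  classical
  set Ip := I ⟨pv, hp⟩ with hIp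
  set Mx := Atot I a pv (Ip - 1) with hMx
  set vv := Atot I a pv jw with hvv
  have hIpos : 0 < Ip := by omega
  set j2 := Nat.findGreatest (fun x => Atot I a pv x = vv) (Ip - 1) with hj2
  have hj2v : Atot I a pv j2 = vv :=
    Nat.findGreatest_spec (P := fun x => Atot I a pv x = vv) (m := jw) (n := Ip - 1)
      (by omega) rfl
  have hj2ge : jw ≤ j2 :=
    Nat.le_findGreatest (P := fun x => Atot I a pv x = vv) (by omega) rfl
  have hj2le : j2 ≤ Ip - 1 := Nat.findGreatest_le _
  have hj2Ip : j2 < Ip := by omega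
  have qex : ∃ x, x < Ip ∧ Atot I a pv x = Mx := ⟨Ip - 1, by omega, rfl⟩
  set qx := Nat.find qex with hqxd
  have hqxs : qx < Ip ∧ Atot I a pv qx = Mx := Nat.find_spec qex
  have hj2q : j2 < qx := by
    by_contra hcon
    have h1 : Atot I a pv qx ≤ Atot I a pv j2 := A_mono ha hp (by omega) hj2Ip
    omega
  obtain ⟨bb, hb1, hb2⟩ :=
    exchange hmono ha ⟨pv, hp⟩ ⟨j2, hj2Ip⟩ ⟨qx, hqxs.1⟩ hj2q
    (by -- hgap
      have e1 : Atot I a pv j2 = a ⟨pv, hp⟩ ⟨j2, hj2Ip⟩ := Atot_eq I a hp hj2Ip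
      have e2 : Atot I a pv qx = a ⟨pv, hp⟩ ⟨qx, hqxs.1⟩ := Atot_eq I a hp hqxs.1
      omega)
    (by -- hblock
      intro jjf hlt
      have hlt' : j2 < jjf.val := hlt
      have w1 : Atot I a pv j2 ≤ Atot I a pv jjf.val := A_mono ha hp (by omega) jjf.isLt
      have w2 : ¬ (Atot I a pv jjf.val = vv) :=
        Nat.findGreatest_is_greatest (P := fun x => Atot I a pv x = vv) (n := Ip - 1)
          (hj2 ▸ hlt') (by omega)
      have w3 : Atot I a pv j2 < Atot I a pv jjf.val := by omega
      have e1 : Atot I a pv j2 = a ⟨pv, hp⟩ ⟨j2, hj2Ip⟩ := Atot_eq I a hp hj2Ip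
      have e2 : Atot I a pv jjf.val = a ⟨pv, hp⟩ ⟨jjf.val, jjf.isLt⟩ :=
        Atot_eq I a hp jjf.isLt
      rw [e1, e2] at w3
      exact w3
    )
    (by -- hqf
      intro jjf hlt
      have hlt' : jjf.val < qx := hlt
      have w2 := Nat.find_min qex (hqxd ▸ hlt')
      have w1 : Atot I a pv jjf.val ≤ Atot I a pv (Ip - 1) :=
        A_mono ha hp (by omega) (by omega)
      have w3 : Atot I a pv jjf.val < Atot I a pv qx := by
        simp only [not_and] at w2
        have := w2 jjf.isLt
        omega
      have e1 : Atot I a pv jjf.val = a ⟨pv, hp⟩ ⟨jjf.val, jjf.isLt⟩ :=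
        Atot_eq I a hp jjf.isLt
      have e2 : Atot I a pv qx = a ⟨pv, hp⟩ ⟨qx, hqxs.1⟩ := Atot_eq I a hp hqxs.1
      rw [e1, e2] at w3
      exact w3
    )
    (by -- hupper
      intro ht hjx
      have ht' : 0 < pv := ht
      have hjx' : j2 < I ⟨pv - 1, lt_of_le_of_lt (Nat.sub_le _ _) hp⟩ := hjx
      have happ := hup j2 hj2ge (by omega) ht' hjx'
      rw [← hj2v] at happ
      rw [Atot_eq I a hp hj2Ip,
          Atot_eq I a (lt_of_le_of_lt (Nat.sub_le _ _) hp) hjx'] at happ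
      exact happ
    )
  exact absurd (hbal bb hb1) (not_le.mpr hb2)

/-! ### every entry of a balanced row is bounded by some ceiling -/

lemma lemA {m : ℕ} {I : Fin m → ℕ} (hmono : StrictMono I) (hpos : ∀ k, 0 < I k)
    {d : Fin m → ℕ} {a : (k : Fin m) → Fin (I k) → ℕ}
    (ha : IsAdmissible I hmono.monotone d a)
    (hbal : ∀ b, IsAdmissible I hmono.monotone d b → spreadVal I a ≤ spreadVal I b) :
    ∀ (pv : ℕ) (hp : pv < m) (j : Fin (I ⟨pv, hp⟩)),
      ∃ r : Fin m, r.val ≤ pv ∧ (a ⟨pv, hp⟩ j : ℤ) ≤ ceilZ I d r := by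
  intro pv
  induction pv using Nat.strong_induction_on with
  | _ pv IH =>
  intro hp j
  classical
  have hIpos : 0 < I ⟨pv, hp⟩ := hpos ⟨pv, hp⟩
  set Mx := Atot I a pv (I ⟨pv, hp⟩ - 1) with hMxd
  suffices hEx : ∃ r : Fin m, r.val ≤ pv ∧ (Mx : ℤ) ≤ ceilZ I d r by
    obtain ⟨r, hr1, hr2⟩ := hEx
    refine ⟨r, hr1, le_trans ?_ hr2⟩
    have h2 : Atot I a pv j.val ≤ Mx := A_mono ha hp (by omega) (by omega)
    have e1 : Atot I a pv j.val = a ⟨pv, hp⟩ j := Atot_eq I a hp j.isLt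
    exact_mod_cast (by omega : a ⟨pv, hp⟩ j ≤ Mx)
  by_contra hcon0
  push_neg at hcon0
  set i0 := fprev I ⟨pv, hp⟩ with hi0d
  set d0 := fprev d ⟨pv, hp⟩ with hd0d
  have hppf : pv - 1 < m := lt_of_le_of_lt (Nat.sub_le _ _) hp
  have hMx1 : 1 ≤ Mx := by
    rcases Nat.eq_zero_or_pos pv with hz | hz
    · have h0 := ceil_nonneg_zero I d ⟨pv, hp⟩ hz (hpos _)
      have h1 := hcon0 ⟨pv, hp⟩ (le_refl pv)
      omega
    · obtain ⟨r, hr1, hr2⟩ := IH (pv - 1) (by omega) hppf ⟨0, hpos _⟩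
      have h3 := hcon0 r (by omega)
      have h4 : (0:ℤ) ≤ (a ⟨pv - 1, hppf⟩ ⟨0, hpos _⟩ : ℤ) := by positivity
      omega
  have hi0lt : i0 < I ⟨pv, hp⟩ := by
    rcases Nat.eq_zero_or_pos pv with hz | hz
    · have h5 : i0 = 0 := by rw [hi0d]; unfold fprev; rw [dif_pos hz]
      omega
    · have hi0e : i0 = I ⟨pv - 1, hppf⟩ := by
        rw [hi0d]; unfold fprev; rw [dif_neg (show ¬(pv = 0) by omega)]
      rw [hi0e]
      exact hmono (Fin.mk_lt_mk.mpr (by omega))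
  have case2 : (∑ jj ∈ Finset.range i0, Atot I a pv jj = d0) → False := by
    intro hs0
    set μ := Atot I a pv i0 with hμd
    rcases le_or_gt (μ + 2) Mx with hm2 | hm2
    · refine exchange_block hmono ha hbal pv hp i0 (by omega) (by omega) ?_
      intro x h1 h2 h3 h4
      have hi0e : i0 = I ⟨pv - 1, hppf⟩ := by
        rw [hi0d]; unfold fprev; rw [dif_neg (show ¬(pv = 0) by omega)]
      have h4' : x < i0 := by rw [hi0e]; exact h4
      omega
    · have hconp := hcon0 ⟨pv, hp⟩ (le_refl pv)
      have hcb := ceil_bound I d ⟨pv, hp⟩ (by rw [← hi0d]; exact hi0lt)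
        ((Mx : ℤ) - 1) (by omega)
      rw [← hd0d, ← hi0d] at hcb
      have hsum := A_sum_range ha hp
      have hsplit : ∑ jj ∈ Finset.range i0, Atot I a pv jj
          + ∑ jj ∈ Finset.Ico i0 (I ⟨pv, hp⟩), Atot I a pv jj
          = ∑ jj ∈ Finset.range (I ⟨pv, hp⟩), Atot I a pv jj := by
        rw [Finset.range_eq_Ico, Finset.range_eq_Ico]
        exact Finset.sum_Ico_consecutive (fun jj => Atot I a pv jj) (Nat.zero_le i0) (le_of_lt hi0lt)
      have hIcoe : Finset.Ico i0 (I ⟨pv, hp⟩) = Finset.Ico i0 ((I ⟨pv, hp⟩ - 1) + 1) := by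
        congr 1; omega
      have htop : ∑ jj ∈ Finset.Ico i0 (I ⟨pv, hp⟩), Atot I a pv jj
          = (∑ jj ∈ Finset.Ico i0 (I ⟨pv, hp⟩ - 1), Atot I a pv jj) + Mx := by
        rw [hIcoe, Finset.sum_Ico_succ_top (by omega : i0 ≤ I ⟨pv, hp⟩ - 1), ← hMxd]
      have hterm : ∀ x ∈ Finset.Ico i0 (I ⟨pv, hp⟩ - 1), Mx - 1 ≤ Atot I a pv x := by
        intro x hx
        rw [Finset.mem_Ico] at hx
        have h6 : μ ≤ Atot I a pv x := A_mono ha hp hx.1 (by omega)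
        omega
      have hlow : (I ⟨pv, hp⟩ - 1 - i0) * (Mx - 1)
          ≤ ∑ jj ∈ Finset.Ico i0 (I ⟨pv, hp⟩ - 1), Atot I a pv jj := by
        calc (I ⟨pv, hp⟩ - 1 - i0) * (Mx - 1)
            = ∑ _jj ∈ Finset.Ico i0 (I ⟨pv, hp⟩ - 1), (Mx - 1) := by
              rw [Finset.sum_const, Nat.card_Ico, smul_eq_mul]
          _ ≤ _ := Finset.sum_le_sum hterm
      have harith : (I ⟨pv, hp⟩ - 1 - i0) * (Mx - 1) + Mx
          = (Mx - 1) * (I ⟨pv, hp⟩ - i0) + 1 := by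
        obtain ⟨A, hA⟩ : ∃ A, I ⟨pv, hp⟩ - i0 = A + 1 := ⟨I ⟨pv, hp⟩ - i0 - 1, by omega⟩
        obtain ⟨B, hB⟩ : ∃ B, Mx = B + 1 := ⟨Mx - 1, by omega⟩
        have e1 : I ⟨pv, hp⟩ - 1 - i0 = A := by omega
        have e2 : Mx - 1 = B := by omega
        rw [e1, e2, hB, hA]
        ring
      have hX : (((Mx - 1) * (I ⟨pv, hp⟩ - i0) : ℕ) : ℤ)
          = ((Mx : ℤ) - 1) * ((I ⟨pv, hp⟩ : ℤ) - (i0 : ℤ)) := by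
        push_cast [Nat.cast_sub (by omega : 1 ≤ Mx), Nat.cast_sub (le_of_lt hi0lt)]
        ring
      rw [← hX] at hcb
      omega
  rcases Nat.eq_zero_or_pos pv with hz | hz
  · apply case2
    have h5 : i0 = 0 := by rw [hi0d]; unfold fprev; rw [dif_pos hz]
    have hd00 : d0 = 0 := by rw [hd0d]; unfold fprev; rw [dif_pos hz]
    rw [h5, hd00]
    simp
  · have hi0e : i0 = I ⟨pv - 1, hppf⟩ := by
      rw [hi0d]; unfold fprev; rw [dif_neg (show ¬(pv = 0) by omega)]
    have hd0e : d0 = d ⟨pv - 1, hppf⟩ := by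
      rw [hd0d]; unfold fprev; rw [dif_neg (show ¬(pv = 0) by omega)]
    have hstar : ∀ jj : ℕ, jj < i0 → Atot I a (pv - 1) jj + 1 ≤ Mx := by
      intro jj hjj
      have hjj' : jj < I ⟨pv - 1, hppf⟩ := by rw [← hi0e]; exact hjj
      obtain ⟨r, hr1, hr2⟩ := IH (pv - 1) (by omega) hppf ⟨jj, hjj'⟩
      have h3 := hcon0 r (by omega)
      have e1 : Atot I a (pv - 1) jj = a ⟨pv - 1, hppf⟩ ⟨jj, hjj'⟩ := Atot_eq I a hppf hjj'
      omega
    by_cases hex : ∃ jj : ℕ, jj < i0 ∧ Atot I a pv jj < Atot I a (pv - 1) jj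
    · obtain ⟨jj, hjj1, hjj2⟩ := hex
      refine exchange_block hmono ha hbal pv hp jj (by omega) ?_ ?_
      · have := hstar jj hjj1
        omega
      · intro x h1 h2 h3 h4
        have hx' : x < I ⟨pv - 1, hppf⟩ := h4
        have h7 : Atot I a (pv - 1) jj ≤ Atot I a (pv - 1) x := A_mono ha hppf h1 hx'
        omega
    · apply case2
      push_neg at hex
      have heq : ∀ jj ∈ Finset.range i0, Atot I a pv jj = Atot I a (pv - 1) jj := by
        intro jj hjj
        rw [Finset.mem_range] at hjj
        have hle2 := hex jj hjj
        have hjj' : jj < I ⟨pv - 1, hppf⟩ := by rw [← hi0e]; exact hjj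
        have hstp : Atot I a (pv - 1 + 1) jj ≤ Atot I a (pv - 1) jj :=
          A_step ha (by omega) hjj'
        have he : pv - 1 + 1 = pv := by omega
        rw [he] at hstp
        omega
      rw [Finset.sum_congr rfl heq]
      have hps := A_sum_range ha hppf
      rw [hi0e, hd0e]
      exact hps

/-- If `d k ≥ i_k ⌈(d_p - d_{p-1})/(i_p - i_{p-1})⌉` for all `p < k`, then the balanced
`(I, d)`-admissible set of sequences satisfies `a_{k,j} = a_{k-1,j}` for `j ≤ i_{k-1}`. -/
theorem balanced_admissible_eq_prev (m n : ℕ) (I : Fin m → ℕ)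
    (hmono : StrictMono I) (hpos : ∀ k, 0 < I k) (hlt : ∀ k, I k < n)
    (d : Fin m → ℕ) (k : Fin m) (hk : 1 ≤ k.val)
    (hcond : ∀ p : Fin m, p < k →
      (I k : ℤ) * ⌈((d p : ℚ) - (fprev d p : ℚ)) / ((I p : ℚ) - (fprev I p : ℚ))⌉
        ≤ (d k : ℤ))
    (a : (k : Fin m) → Fin (I k) → ℕ)
    (ha : IsAdmissible I hmono.monotone d a)
    (hbal : ∀ b : (k : Fin m) → Fin (I k) → ℕ,
      IsAdmissible I hmono.monotone d b → spreadVal I a ≤ spreadVal I b) :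
    ∀ j : Fin (I ⟨k.val - 1, lt_of_le_of_lt (Nat.sub_le _ _) k.isLt⟩),
      a k (Fin.castLE
        (hmono.monotone (show (⟨k.val - 1, lt_of_le_of_lt (Nat.sub_le _ _) k.isLt⟩ : Fin m) ≤ k from
          Fin.le_def.mpr (Nat.sub_le _ _))) j)
        = a ⟨k.val - 1, lt_of_le_of_lt (Nat.sub_le _ _) k.isLt⟩ j := by
  intro j
  classical
  have hkm : k.val < m := k.isLt
  have hppf : k.val - 1 < m := lt_of_le_of_lt (Nat.sub_le _ _) k.isLt
  have hjpp : j.val < I ⟨k.val - 1, hppf⟩ := j.isLt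
  have hjk : j.val < I ⟨k.val, hkm⟩ :=
    lt_of_lt_of_le hjpp (I_mono hmono.monotone (by omega) hkm)
  have hle : Atot I a k.val j.val ≤ Atot I a (k.val - 1) j.val := by
    have h0 := A_step (t := k.val - 1) (j := j.val) ha (by omega) hjpp
    have he : k.val - 1 + 1 = k.val := by omega
    rw [he] at h0
    exact h0
  have hge : Atot I a (k.val - 1) j.val ≤ Atot I a k.val j.val := by
    by_contra hcon
    push_neg at hcon
    obtain ⟨r, hr1, hr2⟩ := lemA hmono hpos ha hbal (k.val - 1) hppf ⟨j.val, hjpp⟩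
    have hrk : r < k := Fin.lt_def.mpr (by omega)
    have hcd' : (I k : ℤ) * ceilZ I d r ≤ (d k : ℤ) := hcond r hrk
    have e1 : Atot I a (k.val - 1) j.val = a ⟨k.val - 1, hppf⟩ ⟨j.val, hjpp⟩ :=
      Atot_eq I a hppf hjpp
    have hw : (Atot I a (k.val - 1) j.val : ℤ) ≤ ceilZ I d r := by rw [e1]; exact hr2
    have hIk0 : (0:ℤ) ≤ (I k : ℤ) := by positivity
    have hmul : (I k : ℤ) * (Atot I a (k.val - 1) j.val : ℤ) ≤ (d k : ℤ) :=
      le_trans (mul_le_mul_of_nonneg_left hw hIk0) hcd'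
    rcases le_or_gt (Atot I a k.val j.val + 2) (Atot I a k.val (I ⟨k.val, hkm⟩ - 1))
      with hbig | hsmol
    · refine exchange_block hmono ha hbal k.val hkm j.val hjk hbig ?_
      intro x h1 h2 h3 h4
      have h5 : Atot I a (k.val - 1) j.val ≤ Atot I a (k.val - 1) x := A_mono ha hppf h1 h4
      omega
    · have hsum' : ∑ jj ∈ Finset.range (I ⟨k.val, hkm⟩), Atot I a k.val jj = d k :=
        A_sum_range ha hkm
      have hlt2 : ∑ jj ∈ Finset.range (I ⟨k.val, hkm⟩), Atot I a k.val jj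
          < ∑ _jj ∈ Finset.range (I ⟨k.val, hkm⟩), (Atot I a k.val j.val + 1) := by
        apply Finset.sum_lt_sum
        · intro x hx
          rw [Finset.mem_range] at hx
          have h8 : Atot I a k.val x ≤ Atot I a k.val (I ⟨k.val, hkm⟩ - 1) :=
            A_mono ha hkm (by omega) (by omega)
          omega
        · exact ⟨j.val, Finset.mem_range.mpr hjk, by omega⟩
      rw [Finset.sum_const, Finset.card_range, smul_eq_mul] at hlt2
      have hIe : I ⟨k.val, hkm⟩ = I k := rfl
      rw [hIe] at hlt2 hsum'
      have hwv : Atot I a k.val j.val + 1 ≤ Atot I a (k.val - 1) j.val := hcon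
      have hml : (I k : ℤ) * ((Atot I a k.val j.val : ℤ) + 1) ≤ (d k : ℤ) :=
        le_trans (mul_le_mul_of_nonneg_left (by exact_mod_cast hwv) hIk0) hmul
      have hc2 : (((I k) * (Atot I a k.val j.val + 1) : ℕ) : ℤ)
          = (I k : ℤ) * ((Atot I a k.val j.val : ℤ) + 1) := by push_cast; ring
      omega
  have heq : Atot I a k.val j.val = Atot I a (k.val - 1) j.val := le_antisymm hle hge
  rw [Atot_eq I a hkm hjk, Atot_eq I a hppf hjpp] at heq
  exact heq
end

section
/- Let K be an infinite field, let V be a K-vector space of dimension n, and let U, W be subspaces of V. Then there exists an invertible linear map g : V → V such that dim(U ∩ g(W)) = max(0, dim U + dim W - n). -/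
set_option linter.unnecessarySimpa false

open Module Submodule

/-- Any finite-dimensional module has a submodule of any dimension `m ≤ finrank`. -/
lemma exists_submodule_finrank_eq' {K M : Type*} [Field K] [AddCommGroup M] [Module K M]
    [FiniteDimensional K M] {m : ℕ} (hm : m ≤ finrank K M) :
    ∃ N : Submodule K M, finrank K N = m := by
  let b := finBasis K M
  refine ⟨span K (Set.range (b ∘ Fin.castLE hm)), ?_⟩
  rw [finrank_span_eq_card (b.linearIndependent.comp _ (Fin.castLE_injective hm))]
  simp

/-- A submodule has submodules of any smaller dimension. -/
lemma exists_le_finrank_eq {K V : Type*} [Field K] [AddCommGroup V] [Module K V]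
    [FiniteDimensional K V] (U : Submodule K V) {m : ℕ} (hm : m ≤ finrank K U) :
    ∃ U' : Submodule K V, U' ≤ U ∧ finrank K U' = m := by
  obtain ⟨N, hN⟩ := exists_submodule_finrank_eq' hm
  exact ⟨N.map U.subtype, Submodule.map_subtype_le U N,
    by rw [Submodule.finrank_map_subtype_eq]; exact hN⟩

/-- Two submodules of the same dimension are related by an automorphism. -/
lemma exists_map_eq_of_finrank_eq {K V : Type*} [Field K] [AddCommGroup V] [Module K V]
    [FiniteDimensional K V] {W W' : Submodule K V} (h : finrank K W = finrank K W') :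
    ∃ g : V ≃ₗ[K] V, Submodule.map (g : V →ₗ[K] V) W = W' := by
  obtain ⟨C, hC⟩ := W.exists_isCompl
  obtain ⟨C', hC'⟩ := W'.exists_isCompl
  have hCfin : finrank K C = finrank K C' := by
    have h1 := Submodule.finrank_add_eq_of_isCompl hC
    have h2 := Submodule.finrank_add_eq_of_isCompl hC'
    omega
  let e1 : (W : Submodule K V) ≃ₗ[K] W' := LinearEquiv.ofFinrankEq _ _ h
  let e2 : (C : Submodule K V) ≃ₗ[K] C' := LinearEquiv.ofFinrankEq _ _ hCfin
  let g : V ≃ₗ[K] V :=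
    (Submodule.prodEquivOfIsCompl W C hC).symm ≪≫ₗ (e1.prodCongr e2) ≪≫ₗ
      Submodule.prodEquivOfIsCompl W' C' hC'
  refine ⟨g, ?_⟩
  have hle : Submodule.map (g : V →ₗ[K] V) W ≤ W' := by
    rintro _ ⟨x, hx, rfl⟩
    have hsymm : (Submodule.prodEquivOfIsCompl W C hC).symm x = (⟨x, hx⟩, 0) := by
      apply (Submodule.prodEquivOfIsCompl W C hC).injective
      rw [LinearEquiv.apply_symm_apply]
      simp [Submodule.coe_prodEquivOfIsCompl']
    show (g : V → V) x ∈ W'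
    simp only [g, LinearEquiv.coe_coe, LinearEquiv.trans_apply, hsymm,
      LinearEquiv.prodCongr_apply, Submodule.coe_prodEquivOfIsCompl']
    simp only [map_zero]
    simpa using (e1 ⟨x, hx⟩).2
  have hrank : finrank K (Submodule.map (g : V →ₗ[K] V) W) = finrank K W' := by
    rw [LinearEquiv.finrank_map_eq, h]
  exact Submodule.eq_of_le_of_finrank_le hle hrank.ge

theorem exists_generic_translate_inf (K : Type*) [Field K] [Infinite K]
    (V : Type*) [AddCommGroup V] [Module K V] [FiniteDimensional K V]
    (n : ℕ) (hn : Module.finrank K V = n) (U W : Submodule K V) :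
    ∃ g : V ≃ₗ[K] V,
      (Module.finrank K ↥(U ⊓ Submodule.map (g : V →ₗ[K] V) W) : ℤ)
        = max 0 ((Module.finrank K ↥U : ℤ) + (Module.finrank K ↥W : ℤ) - n) := by
  set u := finrank K U with hu
  set w := finrank K W with hw
  have hun : u ≤ n := hn ▸ U.finrank_le
  have hwn : w ≤ n := hn ▸ W.finrank_le
  set m := u + w - n with hm
  obtain ⟨C, hC⟩ := U.exists_isCompl
  have hCrank : finrank K C = n - u := by
    have := Submodule.finrank_add_eq_of_isCompl hC
    omega
  obtain ⟨U', hU'le, hU'⟩ := exists_le_finrank_eq U (show m ≤ u by omega)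
  obtain ⟨C', hC'le, hC'⟩ := exists_le_finrank_eq C (show w - m ≤ finrank K C by omega)
  have hdisj : Disjoint U' C' := hC.disjoint.mono hU'le hC'le
  have hWrank : finrank K (U' ⊔ C' : Submodule K V) = w := by
    have := Submodule.finrank_sup_add_finrank_inf_eq U' C'
    rw [hdisj.eq_bot, finrank_bot] at this
    omega
  have hinf : U ⊓ (U' ⊔ C') = U' := by
    rw [inf_comm, sup_inf_assoc_of_le _ hU'le,
      (hC.disjoint.mono_right hC'le).symm.eq_bot, sup_bot_eq]
  obtain ⟨g, hg⟩ := exists_map_eq_of_finrank_eq (W := W) (W' := U' ⊔ C') (by omega)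
  refine ⟨g, ?_⟩
  rw [hg, hinf, hU']
  omega
end

section
/- Let K be an infinite field, let V be a K-vector space of dimension n, and let U, W be subspaces of V. Then there exists an invertible linear map g : V → V such that dim(U + g(W)) = min(n, dim U + dim W). -/
open Module Submodule

/-- In a finite-dimensional space, there is a submodule of any dimension `k ≤ finrank`. -/
lemma aux_exists_submodule_finrank_eq (K V : Type*) [Field K] [AddCommGroup V] [Module K V]
    [FiniteDimensional K V] (k : ℕ) (hk : k ≤ Module.finrank K V) :
    ∃ Q : Submodule K V, Module.finrank K Q = k := by
  classical
  let b := Module.finBasis K V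
  refine ⟨Submodule.span K (Set.range (b ∘ Fin.castLE hk)), ?_⟩
  rw [finrank_span_eq_card (b.linearIndependent.comp _ (Fin.castLE_injective hk))]
  simp

lemma aux_exists_le_finrank_eq (K V : Type*) [Field K] [AddCommGroup V] [Module K V]
    [FiniteDimensional K V] (P : Submodule K V) (k : ℕ) (hk : k ≤ Module.finrank K P) :
    ∃ Q : Submodule K V, Q ≤ P ∧ Module.finrank K Q = k := by
  obtain ⟨Q', hQ'⟩ := aux_exists_submodule_finrank_eq K P k hk
  exact ⟨Q'.map P.subtype, Submodule.map_subtype_le P Q',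
    by rw [Submodule.finrank_map_subtype_eq]; exact hQ'⟩

/-- Two submodules of the same finrank are related by an automorphism. -/
lemma aux_exists_equiv_map_eq (K V : Type*) [Field K] [AddCommGroup V] [Module K V]
    [FiniteDimensional K V] (W W' : Submodule K V)
    (h : Module.finrank K W = Module.finrank K W') :
    ∃ g : V ≃ₗ[K] V, Submodule.map (g : V →ₗ[K] V) W = W' := by
  obtain ⟨Wc, hWc⟩ := W.exists_isCompl
  obtain ⟨W'c, hW'c⟩ := W'.exists_isCompl
  have hc : Module.finrank K Wc = Module.finrank K W'c := by
    have h1 := Submodule.finrank_add_eq_of_isCompl hWc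
    have h2 := Submodule.finrank_add_eq_of_isCompl hW'c
    omega
  let e1 : W ≃ₗ[K] W' := LinearEquiv.ofFinrankEq _ _ h
  let e2 : Wc ≃ₗ[K] W'c := LinearEquiv.ofFinrankEq _ _ hc
  let e3 : (W × Wc) ≃ₗ[K] (W' × W'c) := LinearEquiv.prodCongr e1 e2
  refine ⟨(Submodule.prodEquivOfIsCompl W Wc hWc).symm.trans
    (e3.trans (Submodule.prodEquivOfIsCompl W' W'c hW'c)), ?_⟩
  apply le_antisymm
  · rintro x ⟨w, hw, rfl⟩
    simp only [LinearEquiv.coe_coe, LinearEquiv.trans_apply]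
    rw [show w = ((⟨w, hw⟩ : W) : V) from rfl,
      Submodule.prodEquivOfIsCompl_symm_apply_left]
    simp only [e3, LinearEquiv.prodCongr_apply, map_zero, Submodule.coe_prodEquivOfIsCompl']
    simp
  · intro y hy
    refine ⟨e1.symm ⟨y, hy⟩, (e1.symm ⟨y, hy⟩).2, ?_⟩
    simp only [LinearEquiv.coe_coe, LinearEquiv.trans_apply]
    rw [Submodule.prodEquivOfIsCompl_symm_apply_left]
    simp [e3, LinearEquiv.prodCongr_apply, Submodule.coe_prodEquivOfIsCompl']

theorem exists_generic_translate_sup (K : Type*) [Field K] [Infinite K]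
    (V : Type*) [AddCommGroup V] [Module K V] [FiniteDimensional K V]
    (n : ℕ) (hn : Module.finrank K V = n) (U W : Submodule K V) :
    ∃ g : V ≃ₗ[K] V,
      (Module.finrank K ↥(U ⊔ Submodule.map (g : V →ₗ[K] V) W) : ℤ)
        = min (n : ℤ) ((Module.finrank K ↥U : ℤ) + (Module.finrank K ↥W : ℤ)) := by
  classical
  set u := Module.finrank K U with hu
  set w := Module.finrank K W with hw
  have hUle : u ≤ n := hn ▸ U.finrank_le
  have hWle : w ≤ n := hn ▸ W.finrank_le
  set k := min w (n - u) with hk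
  -- complement of U
  obtain ⟨Uc, hUc⟩ := U.exists_isCompl
  have hUcrank : Module.finrank K Uc = n - u := by
    have := Submodule.finrank_add_eq_of_isCompl hUc
    omega
  obtain ⟨C, hCle, hCrank⟩ := aux_exists_le_finrank_eq K V Uc k (by omega)
  obtain ⟨D, hDle, hDrank⟩ := aux_exists_le_finrank_eq K V U (w - k) (by omega)
  have hCU : C ⊓ U = ⊥ := (hUc.symm.disjoint.mono_left hCle).eq_bot
  have hCD : C ⊓ D = ⊥ := by
    rw [eq_bot_iff, ← hCU]
    exact inf_le_inf_left C hDle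
  set W' := C ⊔ D with hW'
  have hW'rank : Module.finrank K W' = w := by
    have := Submodule.finrank_sup_add_finrank_inf_eq C D
    rw [hCD] at this
    simp only [finrank_bot] at this
    show Module.finrank K ↥(C ⊔ D) = w
    omega
  obtain ⟨g, hg⟩ := aux_exists_equiv_map_eq K V W W' hW'rank.symm
  refine ⟨g, ?_⟩
  rw [hg]
  have hsup : U ⊔ W' = U ⊔ C := by
    rw [hW', sup_comm C D, ← sup_assoc, sup_of_le_left hDle]
  have hUC : U ⊓ C = ⊥ := by rw [inf_comm]; exact hCU
  have hrank : Module.finrank K ↥(U ⊔ W') = u + k := by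
    have := Submodule.finrank_sup_add_finrank_inf_eq U C
    rw [hUC] at this
    simp only [finrank_bot] at this
    rw [hsup]
    omega
  rw [hrank]
  omega
end

section
/- Let f : Y → Z be a continuous closed map of irreducible topological spaces of finite Krull dimension, with Y and Z irreducible and f(Y) closed. Let Z₀ ⊆ Z be a closed irreducible subset with dim Z₀ = dim Z - 1. Suppose Z₀ ⊆ f(Y) and f⁻¹(Z₀) is a proper closed subset of Y. Then f is surjective. -/
open Order TopologicalSpace Topology

theorem surjective_of_hits_codim_one (Y Z : Type*)
    [TopologicalSpace Y] [TopologicalSpace Z]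
    [IrreducibleSpace Y] [IrreducibleSpace Z]
    (hYdim : topologicalKrullDim Y < ⊤) (hZdim : topologicalKrullDim Z < ⊤)
    (f : Y → Z) (hcont : Continuous f) (hclosed : IsClosedMap f)
    (hrange : IsClosed (Set.range f))
    (Z₀ : Set Z) (hZ₀closed : IsClosed Z₀) (hZ₀irr : IsIrreducible Z₀)
    (hdim : topologicalKrullDim ↥Z₀ + 1 = topologicalKrullDim Z)
    (hsub : Z₀ ⊆ Set.range f) (hproper : f ⁻¹' Z₀ ≠ Set.univ) :
    Function.Surjective f := by
  by_contra hns
  -- the range is a proper closed irreducible subset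
  have hRirr : IsIrreducible (Set.range f) := by
    have := (IrreducibleSpace.isIrreducible_univ Y).image f hcont.continuousOn
    simpa using this
  have hRne : Set.range f ≠ Set.univ := by
    intro h
    exact hns fun z => by
      have : z ∈ Set.range f := h ▸ Set.mem_univ z
      exact this
  -- Z₀ ≠ range f (otherwise preimage is univ)
  have hZ₀ne : Z₀ ≠ Set.range f := by
    intro h
    apply hproper
    ext y
    simp [h]
  have hZ₀ssub : Z₀ ⊂ Set.range f := ⟨hsub, fun h => hZ₀ne (le_antisymm hsub h)⟩
  -- irreducible closeds of Z
  set R : IrreducibleCloseds Z := ⟨Set.range f, hRirr, hrange⟩ with hR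
  set U : IrreducibleCloseds Z := ⟨Set.univ, IrreducibleSpace.isIrreducible_univ Z,
    isClosed_univ⟩ with hU
  -- embedding of irreducible closeds of Z₀ into Z
  have hemb : IsClosedEmbedding ((↑) : Z₀ → Z) := hZ₀closed.isClosedEmbedding_subtypeVal
  set e : IrreducibleCloseds ↥Z₀ → IrreducibleCloseds Z :=
    IrreducibleCloseds.map _ hemb.continuous with he
  have hesub : ∀ T : IrreducibleCloseds ↥Z₀, (e T : Set Z) ⊆ Z₀ := by
    intro T z hz
    have hsZ : (Subtype.val '' (T : Set Z₀)) ⊆ Z₀ := by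
      rintro _ ⟨⟨w, hw⟩, -, rfl⟩
      exact hw
    exact closure_minimal hsZ hZ₀closed hz
  -- the extended map
  haveI : IrreducibleSpace ↥Z₀ := Subtype.irreducibleSpace hZ₀irr
  haveI : Nonempty (IrreducibleCloseds ↥Z₀) :=
    ⟨⟨Set.univ, IrreducibleSpace.isIrreducible_univ _, isClosed_univ⟩⟩
  have heR : ∀ T : IrreducibleCloseds ↥Z₀, e T < R := by
    intro T
    have : (e T : Set Z) ⊂ Set.range f := lt_of_le_of_lt (hesub T) hZ₀ssub
    exact this
  have hRU : R < U := by
    show Set.range f ⊂ Set.univ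
    exact Set.ssubset_univ_iff.mpr hRne
  have hgmono : StrictMono (fun x : WithTop (WithTop (IrreducibleCloseds ↥Z₀)) =>
      match x with
      | none => U
      | some none => R
      | some (some T) => e T) := by
    rintro (_ | _ | a) (_ | _ | b) hab
    · exact absurd hab (lt_irrefl _)
    · exact absurd hab not_top_lt
    · exact absurd hab not_top_lt
    · exact hRU
    · exact absurd hab (lt_irrefl _)
    · exact absurd hab (fun h => not_top_lt (WithTop.coe_lt_coe.mp h))
    · exact (heR a).trans hRU
    · exact heR a
    · exact IrreducibleCloseds.map_strictMono_of_isInducing hemb.isInducing (by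
        rw [← WithTop.coe_lt_coe, ← WithTop.coe_lt_coe]
        exact hab)
  have hchain : krullDim (WithTop (WithTop (IrreducibleCloseds ↥Z₀))) ≤
      krullDim (IrreducibleCloseds Z) := krullDim_le_of_strictMono _ hgmono
  rw [krullDim_WithTop, krullDim_WithTop] at hchain
  -- arithmetic contradiction
  have h2 : topologicalKrullDim ↥Z₀ + 1 + 1 ≤ topologicalKrullDim Z := hchain
  rw [hdim] at h2
  haveI : Nonempty (IrreducibleCloseds Z) := ⟨U⟩
  have hne_bot : topologicalKrullDim Z ≠ ⊥ := by
    intro h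
    have h0 := krullDim_nonneg (α := IrreducibleCloseds Z)
    rw [show krullDim (IrreducibleCloseds Z) = topologicalKrullDim Z from rfl, h] at h0
    exact absurd h0 (by simp)
  obtain ⟨m, hm⟩ := WithBot.ne_bot_iff_exists.mp hne_bot
  have hmne : m ≠ ⊤ := by
    intro h
    have : topologicalKrullDim Z = ⊤ := by rw [← hm, h]; rfl
    rw [this] at hZdim
    exact lt_irrefl _ hZdim
  rw [← hm] at h2
  lift m to ℕ using hmne with n
  norm_cast at h2
  omega
end
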